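/- arXiv:2006.15539 — 11 statements merged into one kernel-verified Lean document; each statement's English description precedes it below -/
import Mathlib

section
/- Let G and H be real Hilbert spaces, let L, C : G → H be bounded linear operators with C compact, and assume that L − λ₀C is bijective for some λ₀ ∈ ℝ. Let (λ*, x*) be a simple eigenpoint, i.e. ‖x*‖ = 1, ker(L − λ*C) = ℝx*, and Cx* ∉ range(L − λ*C), and set T = L − λ*C. Then the bounded linear operator A : ℝ × {x*}ᗮ → H defined by A(λ̇, ẋ) = Tẋ − λ̇Cx* is bijective, and likewise the operator (λ̇, ẋ) ↦ Tẋ + λ̇Cx* is bijective. (Here {x*}ᗮ denotes the orthogonal complement of x* in G.) -/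
/-!
With `T = L − λ*C`, the operator `B = T − ⟪x*, ·⟫ Cx*` differs from the isomorphism `L − λ₀C` by a
compact operator, and it is injective: `Bz = 0` forces `⟪x*, z⟫ = 0` because `Cx* ∉ range T`, and
then `z ∈ ker T ∩ {x*}ᗮ = 0`. By the Fredholm alternative `B` is bijective. Since `Tx* = 0`,
composing `B` with the isomorphism `(t, v) ↦ t x* + v` of `ℝ × {x*}ᗮ` onto `G` gives
`(t, v) ↦ Tv − t Cx*`; replacing `Cx*` by `−Cx*` gives the other operator.
-/

open Function

section CompactPerturbation

variable {𝕜 X Y : Type*} [NontriviallyNormedField 𝕜]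
  [NormedAddCommGroup X] [NormedSpace 𝕜 X] [CompleteSpace X]
  [NormedAddCommGroup Y] [NormedSpace 𝕜 Y]

theorem IsCompactOperator.bijective_one_sub_of_injective {K : X →L[𝕜] X}
    (hK : IsCompactOperator K) (hinj : Injective ⇑(1 - K)) : Bijective ⇑(1 - K) := by
  have hev : ¬ Module.End.HasEigenvalue (K : Module.End 𝕜 X) 1 := by
    intro h1
    obtain ⟨v, hv, hv0⟩ := h1.exists_hasEigenvector
    have hKv : K v = v := by simpa using Module.End.mem_eigenspace_iff.1 hv
    exact hv0 (hinj (by simp [hKv]))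
  have := (hK.hasEigenvalue_or_mem_resolventSet one_ne_zero).resolve_left hev
  rwa [spectrum.mem_resolventSet_iff, map_one, ContinuousLinearMap.isUnit_iff_bijective] at this

theorem ContinuousLinearEquiv.bijective_of_injective_of_isCompactOperator_sub (S : X ≃L[𝕜] Y)
    {T : X →L[𝕜] Y} (hST : IsCompactOperator ⇑((S : X →L[𝕜] Y) - T))
    (hT : Injective T) : Bijective T := by
  set K : X →L[𝕜] X := (S.symm : Y →L[𝕜] X) ∘L ((S : X →L[𝕜] Y) - T)
  have hK : (1 - K : X →L[𝕜] X) = (S.symm : Y →L[𝕜] X) ∘L T := by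
    ext x; simp [K]
  have := (hST.clm_comp (S.symm : Y →L[𝕜] X)).bijective_one_sub_of_injective
    (by rw [hK]; exact S.symm.injective.comp hT)
  rw [hK, ContinuousLinearMap.coe_comp] at this
  simpa using S.bijective.comp this

end CompactPerturbation

section Hilbert

variable {G H : Type*} [NormedAddCommGroup G] [InnerProductSpace ℝ G]
  [NormedAddCommGroup H] [InnerProductSpace ℝ H]

theorem injective_sub_smulRight_innerSL {T : G →L[ℝ] H} {x : G} {y : H}
    (hker : LinearMap.ker (T : G →ₗ[ℝ] H) = ℝ ∙ x) (hy : y ∉ LinearMap.range (T : G →ₗ[ℝ] H)) :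
    Injective ⇑(T - (innerSL ℝ x).smulRight y) := by
  refine (injective_iff_map_eq_zero _).2 fun z hz => ?_
  have hTz : T z = inner ℝ x z • y := by simpa [sub_eq_zero] using hz
  have horth : inner ℝ x z = (0 : ℝ) := by
    by_contra h
    exact hy ⟨(inner ℝ x z)⁻¹ • z, by simp [hTz, smul_smul, h]⟩
  have hspan : z ∈ ℝ ∙ x := by
    rw [← hker]; simpa [horth] using hTz
  have hperp : z ∈ (ℝ ∙ x)ᗮ := Submodule.mem_orthogonal_singleton_iff_inner_right.2 horth
  simpa [Submodule.inf_orthogonal_eq_bot] using Submodule.mem_inf.2 ⟨hspan, hperp⟩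

theorem bijective_smul_add_orthogonal {x : G} (hx : x ≠ 0) :
    Bijective fun p : ℝ × (ℝ ∙ x)ᗮ => p.1 • x + (p.2 : G) := by
  let e := (LinearEquiv.toSpanNonzeroSingleton ℝ G x hx).prodCongr (LinearEquiv.refl ℝ (ℝ ∙ x)ᗮ)
    ≪≫ₗ Submodule.prodEquivOfIsCompl _ _ (Submodule.isCompl_orthogonal _)
  convert e.bijective with p
  simp [e]

variable [CompleteSpace G]

theorem bijective_apply_orthogonal_sub_smul (S : G ≃L[ℝ] H) {T : G →L[ℝ] H}
    (hST : IsCompactOperator ⇑((S : G →L[ℝ] H) - T)) {x : G} (hx : ‖x‖ = 1) {y : H}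
    (hker : LinearMap.ker (T : G →ₗ[ℝ] H) = ℝ ∙ x) (hy : y ∉ LinearMap.range (T : G →ₗ[ℝ] H)) :
    Bijective fun p : ℝ × (ℝ ∙ x)ᗮ => T p.2 - p.1 • y := by
  set r := (innerSL ℝ x).smulRight y
  have hr : IsCompactOperator ⇑r :=
    (isCompactOperator_of_locallyCompactSpace_dom (innerSL ℝ x)).clm_comp
      ((1 : ℝ →L[ℝ] ℝ).smulRight y)
  have hSB : IsCompactOperator ⇑((S : G →L[ℝ] H) - (T - r)) := by
    rw [sub_sub_eq_add_sub, add_sub_right_comm, FunLike.coe_add]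
    exact hST.add hr
  have hB : Bijective ⇑(T - r) := S.bijective_of_injective_of_isCompactOperator_sub hSB
    (injective_sub_smulRight_innerSL hker hy)
  have hTx : T x = 0 := by
    change x ∈ LinearMap.ker (T : G →ₗ[ℝ] H)
    exact hker ▸ Submodule.mem_span_singleton_self x
  have hx0 : x ≠ 0 := norm_ne_zero_iff.1 (by simp [hx])
  convert hB.comp (bijective_smul_add_orthogonal hx0) using 1
  funext p
  have hxp : inner ℝ x (p.2 : G) = (0 : ℝ) :=
    Submodule.mem_orthogonal_singleton_iff_inner_right.1 p.2.2
  simp [r, hTx, hx, hxp, inner_add_right, real_inner_smul_right]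

end Hilbert

/-- If `(λ*, x*)` is a simple eigenpoint of the problem `Lx = λCx`, `‖x‖ = 1`, and
`T = L − λ*C`, then the operator `(λ̇, ẋ) ↦ Tẋ − λ̇Cx*` from `ℝ × {x*}ᗮ` to `H` is bijective,
and likewise `(λ̇, ẋ) ↦ Tẋ + λ̇Cx*` is bijective. -/
theorem simple_eigenpoint_differential_bijective
    {G H : Type*} [NormedAddCommGroup G] [InnerProductSpace ℝ G] [CompleteSpace G]
    [NormedAddCommGroup H] [InnerProductSpace ℝ H] [CompleteSpace H]
    (L C : G →L[ℝ] H) (hC : IsCompactOperator ⇑C)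
    (lam0 : ℝ) (h0 : Function.Bijective ⇑(L - lam0 • C))
    (lamS : ℝ) (xs : G) (hxs : ‖xs‖ = 1)
    (hker : LinearMap.ker ((L - lamS • C : G →L[ℝ] H) : G →ₗ[ℝ] H) = Submodule.span ℝ {xs})
    (hrange : C xs ∉ LinearMap.range ((L - lamS • C : G →L[ℝ] H) : G →ₗ[ℝ] H)) :
    Function.Bijective
      (fun p : ℝ × ((Submodule.span ℝ {xs})ᗮ : Submodule ℝ G) =>
        (L - lamS • C) (p.2 : G) - p.1 • C xs) ∧
    Function.Bijective
      (fun p : ℝ × ((Submodule.span ℝ {xs})ᗮ : Submodule ℝ G) =>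
        (L - lamS • C) (p.2 : G) + p.1 • C xs) := by
  let S := ContinuousLinearEquiv.ofBijective (L - lam0 • C)
    (LinearMap.ker_eq_bot.2 h0.1) (LinearMap.range_eq_top.2 h0.2)
  have hST : IsCompactOperator ⇑((S : G →L[ℝ] H) - (L - lamS • C)) := by
    have hSC : (S : G →L[ℝ] H) - (L - lamS • C) = (lamS - lam0) • C := by
      ext v
      simp [S, sub_smul]
    rw [hSC]
    exact hC.smul (lamS - lam0)
  refine ⟨bijective_apply_orthogonal_sub_smul S hST hxs hker hrange, ?_⟩
  simpa using bijective_apply_orthogonal_sub_smul S hST hxs hker (neg_mem_iff.not.2 hrange)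
end

section
/- Let X be a locally compact metric space and let K be a compact subset of X. If every compact subset of X containing K has nonempty boundary in X, then X \ K contains a connected subset whose closure in X is not compact and intersects K. -/
/-!
Pass to the one-point compactification `X ∪ {∞}`, in which `K` is a closed set missing `∞`.
The hypothesis says that no clopen set containing `∞` misses `K`, so by the Šura-Bura theorem the
component of `∞` meets `K`, and by Zorn's lemma it contains a continuum `M` irreducible between
`∞` and `K`. Boundary bumping inside `M` shows that `M \ ({∞} ∪ K)` is connected and dense in `M`:
a separation of it would produce a proper subcontinuum of `M` from `∞` to `K`. Its trace on `X` is
the required set: its closure meets `K`, and it accumulates at `∞`, so its closure is not compact.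
-/

open Set Topology OnePoint

section Continua

variable {Z : Type*} [TopologicalSpace Z]

def IsContinuumJoining (p : Z) (F N : Set Z) : Prop :=
  IsCompact N ∧ IsPreconnected N ∧ p ∈ N ∧ (N ∩ F).Nonempty

theorem IsCompact.connectedComponentIn {G : Set Z} (hG : IsCompact G) (x : Z) :
    IsCompact (connectedComponentIn G x) := by
  by_cases hx : x ∈ G
  · have : CompactSpace G := isCompact_iff_compactSpace.mp hG
    rw [connectedComponentIn_eq_image hx]
    exact isClosed_connectedComponent.isCompact.image continuous_subtype_val
  · rw [connectedComponentIn_eq_empty hx]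
    exact isCompact_empty

theorem IsClosed.insert [T1Space Z] {F : Set Z} (hF : IsClosed F) (p : Z) :
    IsClosed (insert p F) := by
  rw [insert_eq]
  exact isClosed_singleton.union hF

theorem compl_insert_nonempty [T1Space Z] [PreconnectedSpace Z] {p : Z} {F : Set Z}
    (hF : IsClosed F) (hFne : F.Nonempty) (hpF : p ∉ F) : (insert p F)ᶜ.Nonempty := by
  by_contra hS
  have hcover : (univ : Set Z) ⊆ {p} ∪ F := by
    rw [← insert_eq, ← compl_empty_iff.mp (not_nonempty_iff_eq_empty.mp hS)]
  rcases (isPreconnected_iff_subset_of_fully_disjoint_closed isClosed_univ).mp isPreconnected_univ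
    _ _ isClosed_singleton hF hcover (disjoint_singleton_left.mpr hpF) with h | h
  · obtain ⟨k, hk⟩ := hFne
    exact hpF (h (mem_univ k) ▸ hk)
  · exact hpF (h (mem_univ p))

theorem IsPreconnected.iInter_of_directed [T2Space Z] {ι : Type*} [Nonempty ι] {N : ι → Set Z}
    (hdir : Directed (· ⊇ ·) N) (hcomp : ∀ i, IsCompact (N i))
    (hconn : ∀ i, IsPreconnected (N i)) : IsPreconnected (⋂ i, N i) := by
  set s := ⋂ i, N i
  have hs : IsCompact s :=
    (hcomp (Classical.arbitrary ι)).of_isClosed_subset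
      (isClosed_iInter fun i => (hcomp i).isClosed) (iInter_subset _ _)
  rw [isPreconnected_iff_subset_of_fully_disjoint_closed hs.isClosed]
  intro a b ha hb hab hdisj
  obtain ⟨U, V, hU, hV, haU, hbV, hUV⟩ := SeparatedNhds.of_isCompact_isCompact
    (hs.inter_right ha) (hs.inter_right hb) (hdisj.mono inter_subset_right inter_subset_right)
  obtain ⟨i, hi⟩ := exists_subset_nhds_of_isCompact hdir hcomp (U := U ∪ V) fun x hx =>
    (hU.union hV).mem_nhds ((hab hx).imp (fun h => haU ⟨hx, h⟩) fun h => hbV ⟨hx, h⟩)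
  have hsi : s ⊆ N i := iInter_subset _ _
  rcases (hconn i).subset_or_subset hU hV hUV hi with hiU | hiV
  · exact Or.inl fun x hx => (hab hx).resolve_right fun hxb =>
      hUV.notMem_of_mem_left (hiU (hsi hx)) (hbV ⟨hx, hxb⟩)
  · exact Or.inr fun x hx => (hab hx).resolve_left fun hxa =>
      hUV.notMem_of_mem_left (haU ⟨hx, hxa⟩) (hiV (hsi hx))

theorem exists_minimal_isContinuumJoining [T2Space Z] {p : Z} {F N : Set Z} (hF : IsClosed F)
    (hN : IsContinuumJoining p F N) : ∃ M ⊆ N, Minimal (IsContinuumJoining p F) M := by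
  refine zorn_superset_nonempty _ (fun c hc hchain hcne => ?_) N hN
  have : Nonempty c := hcne.to_subtype
  have hdir : Directed (· ⊇ ·) (fun s : c => (s : Set Z)) :=
    IsChain.directed (f := id) hchain.symm
  refine ⟨⋂₀ c, ⟨?_, ?_, fun s hs => (hc hs).2.2.1, ?_⟩, fun s hs => sInter_subset_of_mem hs⟩
  · obtain ⟨s, hs⟩ := hcne
    exact (hc hs).1.of_isClosed_subset (isClosed_sInter fun t ht => (hc ht).1.isClosed)
      (sInter_subset_of_mem hs)
  · rw [sInter_eq_iInter]
    exact .iInter_of_directed hdir (fun s => (hc s.2).1) fun s => (hc s.2).2.1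
  · rw [sInter_eq_iInter, iInter_inter]
    exact IsCompact.nonempty_iInter_of_directed_nonempty_isCompact_isClosed _
      (fun s t => (hdir s t).imp fun _ h =>
        ⟨inter_subset_inter_left F h.1, inter_subset_inter_left F h.2⟩)
      (fun s => (hc s.2).2.2.2) (fun s => (hc s.2).1.inter_right hF)
      fun s => (hc s.2).1.isClosed.inter hF

end Continua

section CompactHausdorff

variable {Z : Type*} [TopologicalSpace Z] [CompactSpace Z] [T2Space Z]

theorem connectedComponent_inter_nonempty_of_forall_isClopen {x : Z} {F : Set Z}
    (hF : IsClosed F) (h : ∀ V : Set Z, IsClopen V → x ∈ V → (V ∩ F).Nonempty) :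
    (connectedComponent x ∩ F).Nonempty := by
  have : Nonempty { V : Set Z // IsClopen V ∧ x ∈ V } := ⟨⟨univ, isClopen_univ, mem_univ x⟩⟩
  rw [connectedComponent_eq_iInter_isClopen, iInter_inter]
  refine IsCompact.nonempty_iInter_of_directed_nonempty_isCompact_isClosed _ ?_
    (fun V => h V V.2.1 V.2.2) (fun V => (V.2.1.isClosed.inter hF).isCompact)
    fun V => V.2.1.isClosed.inter hF
  rintro ⟨V, hV, hxV⟩ ⟨W, hW, hxW⟩
  exact ⟨⟨V ∩ W, hV.inter hW, hxV, hxW⟩, inter_subset_inter_left F inter_subset_left,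
    inter_subset_inter_left F inter_subset_right⟩

theorem IsClosed.connectedComponentIn_inter_frontier_nonempty [PreconnectedSpace Z] {G : Set Z}
    (hG : IsClosed G) (hGne : G ≠ univ) {x : Z} (hx : x ∈ G) :
    (connectedComponentIn G x ∩ frontier G).Nonempty := by
  have : CompactSpace G := isCompact_iff_compactSpace.mp hG.isCompact
  by_contra hne
  obtain ⟨V, hV, hxV, hVfr⟩ : ∃ V : Set G, IsClopen V ∧ ⟨x, hx⟩ ∈ V ∧
      V ∩ (Subtype.val ⁻¹' frontier G) = ∅ := by
    by_contra! hall
    obtain ⟨y, hyC, hyfr⟩ := connectedComponent_inter_nonempty_of_forall_isClopen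
      (isClosed_frontier.preimage continuous_subtype_val) hall
    exact hne ⟨y, connectedComponentIn_eq_image hx ▸ mem_image_of_mem _ hyC, hyfr⟩
  obtain ⟨O, hO, rfl⟩ := isOpen_induced_iff.mp hV.isOpen
  -- Off the frontier of `G`, being open in `G` means being open in `Z`.
  have hOG : Subtype.val '' (Subtype.val ⁻¹' O : Set G) = O ∩ interior G := by
    rw [Subtype.image_preimage_coe]
    refine Subset.antisymm (fun y hy => ⟨hy.2, ?_⟩) fun y hy => ⟨interior_subset hy.2, hy.1⟩
    by_contra hyi
    exact (eq_empty_iff_forall_notMem.mp hVfr) ⟨y, hy.1⟩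
      ⟨hy.2, hG.frontier_eq ▸ ⟨hy.1, hyi⟩⟩
  have hclopen : IsClopen (O ∩ interior G) :=
    ⟨hOG ▸ hG.isClosedEmbedding_subtypeVal.isClosedMap _ hV.isClosed, hO.inter isOpen_interior⟩
  refine hGne (eq_univ_of_univ_subset ?_)
  rw [← hclopen.eq_univ ⟨x, hOG ▸ mem_image_of_mem _ hxV⟩]
  exact inter_subset_right.trans interior_subset

end CompactHausdorff

section Irreducible

variable {Z : Type*} [TopologicalSpace Z] [CompactSpace Z] [T2Space Z] [PreconnectedSpace Z]
  {p : Z} {F : Set Z}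

theorem eq_univ_of_mem_of_frontier_subset (hirr : Minimal (IsContinuumJoining p F) univ)
    {G : Set Z} (hG : IsClosed G) (hp : p ∈ G) (hfr : frontier G ⊆ F) : G = univ := by
  by_contra hGne
  obtain ⟨y, hyC, hyfr⟩ := hG.connectedComponentIn_inter_frontier_nonempty hGne hp
  have := hirr.eq_of_subset ⟨hG.isCompact.connectedComponentIn p,
    isPreconnected_connectedComponentIn, mem_connectedComponentIn hp, y, hyC, hfr hyfr⟩
    (subset_univ _)
  exact hGne (eq_univ_of_univ_subset (this ▸ connectedComponentIn_subset G p))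

theorem eq_univ_of_inter_nonempty_of_frontier_subset
    (hirr : Minimal (IsContinuumJoining p F) univ) {G : Set Z} (hG : IsClosed G)
    (hGF : (G ∩ F).Nonempty) (hfr : frontier G ⊆ {p}) : G = univ := by
  by_contra hGne
  obtain ⟨k, hkG, hkF⟩ := hGF
  obtain ⟨y, hyC, hyfr⟩ := hG.connectedComponentIn_inter_frontier_nonempty hGne hkG
  have := hirr.eq_of_subset ⟨hG.isCompact.connectedComponentIn k,
    isPreconnected_connectedComponentIn, hfr hyfr ▸ hyC, k, mem_connectedComponentIn hkG, hkF⟩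
    (subset_univ _)
  exact hGne (eq_univ_of_univ_subset (this ▸ connectedComponentIn_subset G k))

theorem mem_closure_of_frontier_subset (hirr : Minimal (IsContinuumJoining p F) univ)
    {A : Set Z} (hA : IsOpen A) (hAne : A.Nonempty) (hfr : frontier A ⊆ insert p F) :
    p ∈ closure A := by
  by_contra hp
  refine hAne.ne_empty (compl_univ_iff.mp (eq_univ_of_mem_of_frontier_subset hirr
    hA.isClosed_compl (fun h => hp (subset_closure h)) ?_))
  rw [frontier_compl]
  intro z hz
  exact (hfr hz).resolve_left fun hzp => hp (hzp ▸ frontier_subset_closure hz)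

theorem closure_inter_nonempty_of_frontier_subset (hirr : Minimal (IsContinuumJoining p F) univ)
    {A : Set Z} (hA : IsOpen A) (hAne : A.Nonempty) (hF : F.Nonempty)
    (hfr : frontier A ⊆ insert p F) : (closure A ∩ F).Nonempty := by
  by_contra hAF
  obtain ⟨k, hk⟩ := hF
  refine hAne.ne_empty (compl_univ_iff.mp (eq_univ_of_inter_nonempty_of_frontier_subset hirr
    hA.isClosed_compl ⟨k, fun hkA => hAF ⟨k, subset_closure hkA, hk⟩, hk⟩ ?_))
  rw [frontier_compl]
  intro z hz
  exact (hfr hz).resolve_right fun hzF => hAF ⟨z, frontier_subset_closure hz, hzF⟩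

theorem isPreconnected_closure_of_frontier_subset (hirr : Minimal (IsContinuumJoining p F) univ)
    {A : Set Z} (hA : IsOpen A) (hp : p ∈ closure A) (hfr : frontier A ⊆ insert p F) :
    IsPreconnected (closure A) := by
  suffices key : ∀ c c', IsClosed c → IsClosed c' → closure A ⊆ c ∪ c' → Disjoint c c' →
      p ∈ c → closure A ⊆ c by
    rw [isPreconnected_iff_subset_of_fully_disjoint_closed isClosed_closure]
    intro c c' hc hc' hsub hdisj
    exact (hsub hp).imp (key c c' hc hc' hsub hdisj)
      (key c' c hc' hc (union_comm c c' ▸ hsub) hdisj.symm)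
  intro c c' hc hc' hsub hdisj hpc
  -- `A \ c` is open, misses `p`, and its frontier lies in `F`; irreducibility makes it empty.
  have hAc' : A \ c ⊆ c' := fun a ha => (hsub (subset_closure ha.1)).resolve_left ha.2
  have hfr' : frontier (A \ c)ᶜ ⊆ F := by
    rw [frontier_compl, (hA.sdiff hc).frontier_eq]
    rintro z ⟨hzcl, hzA⟩
    have hzc' : z ∈ c' := closure_minimal hAc' hc' hzcl
    have hzc : z ∉ c := hdisj.notMem_of_mem_right hzc'
    have hzfr : z ∈ frontier A := by
      rw [hA.frontier_eq]
      exact ⟨closure_mono sdiff_subset hzcl, fun hz => hzA ⟨hz, hzc⟩⟩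
    exact (hfr hzfr).resolve_left fun hzp => hzc (hzp ▸ hpc)
  have hempty := compl_univ_iff.mp (eq_univ_of_mem_of_frontier_subset hirr
    (hA.sdiff hc).isClosed_compl (fun h => h.2 hpc) hfr')
  exact closure_minimal (sdiff_eq_empty.mp hempty) hc

theorem closure_eq_univ_of_frontier_subset (hirr : Minimal (IsContinuumJoining p F) univ)
    {A : Set Z} (hA : IsOpen A) (hAne : A.Nonempty) (hF : F.Nonempty)
    (hfr : frontier A ⊆ insert p F) : closure A = univ :=
  have hp := mem_closure_of_frontier_subset hirr hA hAne hfr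
  hirr.eq_of_subset ⟨isClosed_closure.isCompact,
    isPreconnected_closure_of_frontier_subset hirr hA hp hfr, hp,
    closure_inter_nonempty_of_frontier_subset hirr hA hAne hF hfr⟩ (subset_univ _)

theorem isPreconnected_compl_insert (hirr : Minimal (IsContinuumJoining p F) univ)
    (hF : IsClosed F) (hFne : F.Nonempty) : IsPreconnected (insert p F)ᶜ := by
  have hS : IsOpen (insert p F)ᶜ := (hF.insert p).isOpen_compl
  intro u v hu hv hsub ⟨x, hxS, hxu⟩ ⟨y, hyS, hyv⟩
  by_contra huv
  have hfr : frontier ((insert p F)ᶜ ∩ u) ⊆ insert p F := by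
    rw [(hS.inter hu).frontier_eq]
    rintro z ⟨hzcl, hzA⟩
    by_contra hzS
    rcases hsub hzS with hzu | hzv
    · exact hzA ⟨hzS, hzu⟩
    · obtain ⟨w, hwv, hwS, hwu⟩ := mem_closure_iff.mp hzcl v hv hzv
      exact huv ⟨w, hwS, hwu, hwv⟩
  have hdense := closure_eq_univ_of_frontier_subset hirr (hS.inter hu) ⟨x, hxS, hxu⟩ hFne hfr
  obtain ⟨w, hwv, hwS, hwu⟩ := mem_closure_iff.mp (hdense ▸ mem_univ y) v hv hyv
  exact huv ⟨w, hwS, hwu, hwv⟩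

theorem dense_compl_insert (hirr : Minimal (IsContinuumJoining p F) univ) (hF : IsClosed F)
    (hFne : F.Nonempty) (hpF : p ∉ F) : Dense (insert p F)ᶜ := by
  refine dense_iff_closure_eq.mpr <| closure_eq_univ_of_frontier_subset hirr
    (hF.insert p).isOpen_compl (compl_insert_nonempty hF hFne hpF) hFne ?_
  rw [frontier_compl]
  exact (hF.insert p).frontier_subset

end Irreducible

theorem Minimal.isContinuumJoining_subtype {Y : Type*} [TopologicalSpace Y] {p : Y} {F M : Set Y}
    (hM : Minimal (IsContinuumJoining p F) M) :
    Minimal (IsContinuumJoining (⟨p, hM.prop.2.2.1⟩ : M) (Subtype.val ⁻¹' F)) univ := by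
  have : CompactSpace M := isCompact_iff_compactSpace.mp hM.prop.1
  have : PreconnectedSpace M := Subtype.preconnectedSpace hM.prop.2.1
  obtain ⟨y, hyM, hyF⟩ := hM.prop.2.2.2
  refine ⟨⟨isCompact_univ, isPreconnected_univ, mem_univ _, ⟨y, hyM⟩, mem_univ _, hyF⟩,
    fun P ⟨hPc, hPconn, hpP, hPF⟩ _ => ?_⟩
  have hPM : Subtype.val '' P = M := by
    refine hM.eq_of_subset ⟨hPc.image continuous_subtype_val,
      hPconn.image _ continuous_subtype_val.continuousOn, ⟨_, hpP, rfl⟩, ?_⟩ (by simp)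
    obtain ⟨z, hzP, hzF⟩ := hPF
    exact ⟨z, mem_image_of_mem _ hzP, hzF⟩
  intro z _
  obtain ⟨w, hwP, hwz⟩ : (z : Y) ∈ Subtype.val '' P := hPM.symm ▸ z.2
  exact Subtype.val_injective hwz ▸ hwP

theorem Minimal.exists_isConnected_subset_diff_closure_eq {Y : Type*} [TopologicalSpace Y]
    [T2Space Y] {p : Y} {F M : Set Y} (hF : IsClosed F) (hpF : p ∉ F)
    (hM : Minimal (IsContinuumJoining p F) M) :
    ∃ T ⊆ M \ insert p F, IsConnected T ∧ closure T = M := by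
  obtain ⟨hMc, hMconn, hpM, y, hyM, hyF⟩ := hM.prop
  have : CompactSpace M := isCompact_iff_compactSpace.mp hMc
  have : PreconnectedSpace M := Subtype.preconnectedSpace hMconn
  have hirr := hM.isContinuumJoining_subtype
  have hF' : IsClosed (Subtype.val ⁻¹' F : Set M) := hF.preimage continuous_subtype_val
  have hF'ne : (Subtype.val ⁻¹' F : Set M).Nonempty := ⟨⟨y, hyM⟩, hyF⟩
  refine ⟨Subtype.val '' (insert ⟨p, hpM⟩ (Subtype.val ⁻¹' F))ᶜ, ?_, ⟨?_, ?_⟩, ?_⟩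
  · rintro _ ⟨z, hz, rfl⟩
    refine ⟨z.2, fun hz' => hz ?_⟩
    rcases hz' with h | h
    · exact Or.inl (Subtype.ext h)
    · exact Or.inr h
  · exact (compl_insert_nonempty hF' hF'ne hpF).image _
  · exact (isPreconnected_compl_insert hirr hF' hF'ne).image _ continuous_subtype_val.continuousOn
  · rw [hMc.isClosed.isClosedEmbedding_subtypeVal.closure_image_eq,
      (dense_compl_insert hirr hF' hF'ne hpF).closure_eq, image_univ, Subtype.range_coe]

theorem OnePoint.forall_isClopen_inter_nonempty {X : Type*} [TopologicalSpace X] {K : Set X}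
    (h : ∀ D : Set X, IsCompact D → K ⊆ D → (frontier D).Nonempty) (W : Set (OnePoint X))
    (hW : IsClopen W) (hWinf : ∞ ∈ W) : (W ∩ (↑) '' K).Nonempty := by
  by_contra hWK
  have hD : IsCompact ((↑) ⁻¹' Wᶜ : Set X) :=
    ((isClosed_iff_of_notMem (notMem_compl_iff.mpr hWinf)).mp hW.compl.isClosed).2
  refine not_nonempty_iff_eq_empty.mpr ?_ (h _ hD fun k hk hkW => hWK ⟨_, hkW, k, hk, rfl⟩)
  exact (hW.compl.preimage continuous_coe).frontier_eq

theorem OnePoint.not_isCompact_closure_of_infty_mem_closure {X : Type*} [TopologicalSpace X]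
    {C : Set X} (h : ∞ ∈ closure ((↑) '' C : Set (OnePoint X))) : ¬ IsCompact (closure C) := by
  intro hC
  have hclosed : IsClosed ((↑) '' closure C : Set (OnePoint X)) :=
    isClosed_image_coe.mpr ⟨isClosed_closure, hC⟩
  exact infty_notMem_image_coe (closure_minimal (image_mono subset_closure) hclosed h)

/-- Kuratowski-type connectivity lemma: if `K` is a compact subset of a locally compact metric
space `X` and every compact subset of `X` containing `K` has nonempty boundary, then `X \ K`
contains a connected set whose closure in `X` is non-compact and intersects `K`. -/
theorem kuratowski_connectivity_lemma
    {X : Type*} [MetricSpace X] [WeaklyLocallyCompactSpace X]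
    (K : Set X) (hK : IsCompact K)
    (h : ∀ D : Set X, IsCompact D → K ⊆ D → (frontier D).Nonempty) :
    ∃ C : Set X, C ⊆ Kᶜ ∧ IsConnected C ∧ ¬ IsCompact (closure C) ∧
      (closure C ∩ K).Nonempty := by
  set K' : Set (OnePoint X) := (↑) '' K
  have hK' : IsClosed K' := (hK.image continuous_coe).isClosed
  obtain ⟨k, hk⟩ := connectedComponent_inter_nonempty_of_forall_isClopen hK'
    (forall_isClopen_inter_nonempty h)
  obtain ⟨M, -, hM⟩ := exists_minimal_isContinuumJoining hK'
    ⟨isClosed_connectedComponent.isCompact, isPreconnected_connectedComponent,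
      mem_connectedComponent, k, hk⟩
  obtain ⟨T, hTM, hTconn, hTcl⟩ :=
    hM.exists_isConnected_subset_diff_closure_eq hK' infty_notMem_image_coe
  obtain ⟨C, rfl⟩ : ∃ C : Set X, (↑) '' C = T := subset_range_iff_exists_image_eq.mp
    fun y hy => ne_infty_iff_exists.mp fun h => (hTM hy).2 (Or.inl h)
  have hind := isOpenEmbedding_coe.isInducing (X := X)
  refine ⟨C, fun x hxC hxK => (hTM ⟨x, hxC, rfl⟩).2 (Or.inr ⟨x, hxK, rfl⟩),
    ⟨hTconn.nonempty.of_image, hind.isPreconnected_image.mp hTconn.isPreconnected⟩,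
    not_isCompact_closure_of_infty_mem_closure (hTcl ▸ hM.prop.2.2.1), ?_⟩
  obtain ⟨_, hyM, x, hxK, rfl⟩ := hM.prop.2.2.2
  refine ⟨x, ?_, hxK⟩
  rw [hind.closure_eq_preimage_closure_image, hTcl]
  exact hyM
end

section
/- Let E be a real vector space and let T : E → E be a linear map such that the range of id_E − T is finite-dimensional. Then: (i) every subspace W of E containing range(id_E − T) is invariant under T (i.e. T(W) ⊆ W); and (ii) if W₁ and W₂ are finite-dimensional subspaces of E both containing range(id_E − T), then the determinant of the restriction of T to W₁ (as an endomorphism of W₁) equals the determinant of the restriction of T to W₂. -/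
/-!
If `W` contains `R = range (id - T)`, then `T` induces the identity on `W ⧸ R`, so
`det (T|W) = det (T|R) * det (id) = det (T|R)`: every such determinant equals `det (T|R)`.
-/

open LinearMap Submodule

section

variable {R M : Type*} [CommRing R] [AddCommGroup M] [Module R M]

theorem Submodule.apply_mem_of_range_id_sub_le {f : M →ₗ[R] M} {p : Submodule R M}
    (hp : range (LinearMap.id - f) ≤ p) {x : M} (hx : x ∈ p) : f x ∈ p := by
  simpa using p.sub_mem hx (hp ⟨x, rfl⟩)

theorem LinearMap.det_restrict_restrict_comap_subtype {f : M →ₗ[R] M} {p q : Submodule R M}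
    (hpq : p ≤ q) (hp : ∀ x ∈ p, f x ∈ p) (hq : ∀ x ∈ q, f x ∈ q)
    (hpq' : ∀ x ∈ p.comap q.subtype, f.restrict hq x ∈ p.comap q.subtype) :
    LinearMap.det ((f.restrict hq).restrict hpq') = LinearMap.det (f.restrict hp) := by
  rw [← det_conj _ (comapSubtypeEquivOfLe hpq)]
  congr 1

end

section

variable {K V : Type*} [Field K] [AddCommGroup V] [Module K V]

theorem LinearMap.det_eq_det_restrict_of_range_id_sub_le [FiniteDimensional K V]
    {f : V →ₗ[K] V} {p : Submodule K V} (hp : range (LinearMap.id - f) ≤ p) :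
    LinearMap.det f = LinearMap.det (f.restrict fun _ ↦ p.apply_mem_of_range_id_sub_le hp) := by
  have hquot : p.mapQ p f (fun _ ↦ p.apply_mem_of_range_id_sub_le hp) = LinearMap.id := by
    ext x
    simpa [Submodule.Quotient.eq] using p.neg_mem (hp ⟨x, rfl⟩)
  rw [det_eq_det_mul_det p, hquot, det_id, mul_one]

theorem LinearMap.det_restrict_eq_det_restrict_range_id_sub (f : V →ₗ[K] V)
    {W : Submodule K V} [FiniteDimensional K W] (hW : range (LinearMap.id - f) ≤ W) :
    LinearMap.det (f.restrict fun _ ↦ W.apply_mem_of_range_id_sub_le hW) =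
      LinearMap.det
        (f.restrict fun _ ↦ (range (LinearMap.id - f)).apply_mem_of_range_id_sub_le le_rfl) := by
  have hrange : range (LinearMap.id - f.restrict fun _ ↦ W.apply_mem_of_range_id_sub_le hW) ≤
      (range (LinearMap.id - f)).comap W.subtype := by
    rintro _ ⟨x, rfl⟩
    exact ⟨x, rfl⟩
  rw [det_eq_det_restrict_of_range_id_sub_le hrange, det_restrict_restrict_comap_subtype hW]

end

theorem admissible_det_well_defined_general
    {E : Type*} [AddCommGroup E] [Module ℝ E] (T : E →ₗ[ℝ] E) :
    (∀ W : Submodule ℝ E, LinearMap.range (LinearMap.id - T) ≤ W → ∀ x ∈ W, T x ∈ W) ∧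
    (∀ W₁ W₂ : Submodule ℝ E, FiniteDimensional ℝ W₁ → FiniteDimensional ℝ W₂ →
      LinearMap.range (LinearMap.id - T) ≤ W₁ → LinearMap.range (LinearMap.id - T) ≤ W₂ →
      ∀ (h₁ : ∀ x ∈ W₁, T x ∈ W₁) (h₂ : ∀ x ∈ W₂, T x ∈ W₂),
        LinearMap.det (T.restrict h₁) = LinearMap.det (T.restrict h₂)) := by
  refine ⟨fun W hW _ ↦ W.apply_mem_of_range_id_sub_le hW, ?_⟩
  intro W₁ W₂ _ _ hW₁ hW₂ _ _
  rw [T.det_restrict_eq_det_restrict_range_id_sub hW₁,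
    T.det_restrict_eq_det_restrict_range_id_sub hW₂]

/-- Let `T : E → E` be linear with `range (id − T)` finite-dimensional. Then (i) every subspace
`W` containing `range (id − T)` is `T`-invariant; and (ii) the determinants of the restrictions
of `T` to any two finite-dimensional subspaces containing `range (id − T)` coincide. -/
theorem admissible_det_well_defined
    {E : Type*} [AddCommGroup E] [Module ℝ E] (T : E →ₗ[ℝ] E)
    (hT : FiniteDimensional ℝ (LinearMap.range (LinearMap.id - T))) :
    (∀ W : Submodule ℝ E, LinearMap.range (LinearMap.id - T) ≤ W → ∀ x ∈ W, T x ∈ W) ∧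
    (∀ W₁ W₂ : Submodule ℝ E, FiniteDimensional ℝ W₁ → FiniteDimensional ℝ W₂ →
      LinearMap.range (LinearMap.id - T) ≤ W₁ → LinearMap.range (LinearMap.id - T) ≤ W₂ →
      ∀ (h₁ : ∀ x ∈ W₁, T x ∈ W₁) (h₂ : ∀ x ∈ W₂, T x ∈ W₂),
        LinearMap.det (T.restrict h₁) = LinearMap.det (T.restrict h₂)) :=
  admissible_det_well_defined_general T
end

section
/- Let E be a real vector space and let T : E → E be an admissible linear map, i.e. range(id_E − T) is finite-dimensional. Let W be any finite-dimensional subspace of E containing range(id_E − T), so that T restricts to an endomorphism of W. Then the determinant of the restriction of T to W is nonzero if and only if T : E → E is bijective. -/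
/-- For an admissible linear map `T : E → E` (i.e. `range (id − T)` finite-dimensional) and a
finite-dimensional subspace `W ⊇ range (id − T)`, the determinant of the restriction `T|_W` is
nonzero if and only if `T` is bijective. -/
theorem admissible_det_ne_zero_iff_bijective
    {E : Type*} [AddCommGroup E] [Module ℝ E] (T : E →ₗ[ℝ] E)
    (hT : FiniteDimensional ℝ (LinearMap.range (LinearMap.id - T)))
    (W : Submodule ℝ E) (hWfd : FiniteDimensional ℝ W)
    (hW : LinearMap.range (LinearMap.id - T) ≤ W)
    (hinv : ∀ x ∈ W, T x ∈ W) :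
    LinearMap.det (T.restrict hinv) ≠ 0 ↔ Function.Bijective ⇑T := by
  have hmem : ∀ x : E, x - T x ∈ W := fun x =>
    hW ⟨x, by simp [LinearMap.sub_apply]⟩
  constructor
  · intro hdet
    set f := T.restrict hinv with hf
    have hbij : Function.Bijective f := by
      have hcoe : ⇑(f.equivOfDetNeZero hdet) = ⇑f := by
        ext x; rfl
      have := (f.equivOfDetNeZero hdet).bijective
      rwa [hcoe] at this
    constructor
    · intro x y hxy
      have hxW : x - y ∈ W := by
        have h : x - y = (x - T x) - (y - T y) := by rw [hxy]; abel
        rw [h]; exact sub_mem (hmem x) (hmem y)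
      have hz : f ⟨x - y, hxW⟩ = 0 := by
        ext
        simp [hf, LinearMap.restrict_apply, map_sub, hxy]
      have h0 : (⟨x - y, hxW⟩ : W) = 0 := hbij.injective (by simpa using hz)
      have : x - y = 0 := congrArg Subtype.val h0
      exact sub_eq_zero.mp this
    · intro y
      obtain ⟨w, hw⟩ := hbij.surjective ⟨y - T y, hmem y⟩
      refine ⟨(w : E) + y, ?_⟩
      have hTw : T (w : E) = y - T y := congrArg Subtype.val hw
      rw [map_add, hTw]
      abel
  · intro hbij
    have hinj : Function.Injective (T.restrict hinv) := fun a b hab =>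
      Subtype.ext (hbij.injective (congrArg Subtype.val hab))
    have hker : LinearMap.ker (T.restrict hinv) = ⊥ := LinearMap.ker_eq_bot.mpr hinj
    have hUnit : IsUnit (T.restrict hinv) :=
      LinearMap.isUnit_iff_ker_eq_bot _ |>.mpr hker
    exact isUnit_iff_ne_zero.mp ((T.restrict hinv).isUnit_det hUnit)
end

section
/- Let E be a real vector space and let T₁, T₂ : E → E be admissible linear maps, i.e. range(id_E − T₁) and range(id_E − T₂) are finite-dimensional. Then the composition T₂ ∘ T₁ is admissible (range(id_E − T₂T₁) is finite-dimensional), and det(T₂ ∘ T₁) = det(T₂) · det(T₁); explicitly, for any finite-dimensional subspaces W, W₁, W₂ of E containing range(id_E − T₂T₁), range(id_E − T₁), range(id_E − T₂) respectively, the determinant of (T₂T₁)|_W equals the product of the determinants of T₂|_{W₂} and T₁|_{W₁}. -/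
/-!
A map `T` with `range (id - T) ≤ V` acts as the identity on `E ⧸ V`, so its matrix is block
triangular with an identity block and `det T = det (T|_V)`. Hence every determinant in question
may be computed on the single subspace `W ⊔ W₁ ⊔ W₂`, where it is multiplicative. Finiteness of
`range (id - T₂T₁)` comes from `x - T₂T₁x = (x - T₂x) + T₂(x - T₁x)`.
-/

open LinearMap Submodule

namespace LinearMap

variable {K E : Type*} [Field K] [AddCommGroup E] [Module K E]

lemma mapsTo_of_range_id_sub_le {T : E →ₗ[K] E} {V : Submodule K E}
    (h : range (LinearMap.id - T) ≤ V) : ∀ x ∈ V, T x ∈ V := fun x hx => by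
  simpa using V.sub_mem hx (h ⟨x, rfl⟩)

lemma range_id_sub_comp_le (T₁ T₂ : E →ₗ[K] E) :
    range (LinearMap.id - T₂ ∘ₗ T₁) ≤
      range (LinearMap.id - T₂) ⊔ (range (LinearMap.id - T₁)).map T₂ := by
  rintro _ ⟨x, rfl⟩
  have hx : x - T₂ (T₁ x) = (x - T₂ x) + T₂ (x - T₁ x) := by simp
  simp only [sub_apply, id_apply, comp_apply, hx]
  exact add_mem_sup ⟨x, rfl⟩ (mem_map_of_mem ⟨x, rfl⟩)

lemma det_eq_det_restrict_of_range_id_sub_le_s6 [FiniteDimensional K E] {T : E →ₗ[K] E}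
    {V : Submodule K E} (h : range (LinearMap.id - T) ≤ V) :
    LinearMap.det T = LinearMap.det (T.restrict (mapsTo_of_range_id_sub_le h)) := by
  have hquot : V.mapQ V T (mapsTo_of_range_id_sub_le h) = LinearMap.id := by
    ext x
    simpa [Submodule.Quotient.eq] using V.neg_mem (h ⟨x, rfl⟩)
  rw [det_eq_det_mul_det V T (mapsTo_of_range_id_sub_le h), hquot, LinearMap.det_id, mul_one]

lemma det_restrict_eq_of_le {T : E →ₗ[K] E} {V V' : Submodule K E} [FiniteDimensional K V']
    (hVV' : V ≤ V') (h : range (LinearMap.id - T) ≤ V) (hV : ∀ x ∈ V, T x ∈ V)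
    (hV' : ∀ x ∈ V', T x ∈ V') :
    LinearMap.det (T.restrict hV') = LinearMap.det (T.restrict hV) := by
  have hU : range (LinearMap.id - T.restrict hV') ≤ V.comap V'.subtype := by
    rintro _ ⟨x, rfl⟩
    exact h ⟨x, rfl⟩
  let e := comapSubtypeEquivOfLe hVV'
  have hconj : T.restrict hV = (e : _ →ₗ[K] V) ∘ₗ (T.restrict hV').restrict
      (mapsTo_of_range_id_sub_le hU) ∘ₗ (e.symm : V →ₗ[K] _) := by
    ext; rfl
  rw [hconj, det_conj, det_eq_det_restrict_of_range_id_sub_le_s6 hU]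

end LinearMap

/-- The composition of two admissible linear maps `T₁, T₂ : E → E` is admissible, and its
determinant is the product of the determinants: for finite-dimensional subspaces `W, W₁, W₂`
containing `range (id − T₂T₁)`, `range (id − T₁)`, `range (id − T₂)` respectively, one has
`det ((T₂T₁)|_W) = det (T₂|_{W₂}) * det (T₁|_{W₁})`. -/
theorem admissible_det_comp
    {E : Type*} [AddCommGroup E] [Module ℝ E] (T₁ T₂ : E →ₗ[ℝ] E)
    (h₁ : FiniteDimensional ℝ (LinearMap.range (LinearMap.id - T₁)))
    (h₂ : FiniteDimensional ℝ (LinearMap.range (LinearMap.id - T₂))) :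
    FiniteDimensional ℝ (LinearMap.range (LinearMap.id - T₂ ∘ₗ T₁)) ∧
    (∀ W W₁ W₂ : Submodule ℝ E,
      FiniteDimensional ℝ W → FiniteDimensional ℝ W₁ → FiniteDimensional ℝ W₂ →
      LinearMap.range (LinearMap.id - T₂ ∘ₗ T₁) ≤ W →
      LinearMap.range (LinearMap.id - T₁) ≤ W₁ →
      LinearMap.range (LinearMap.id - T₂) ≤ W₂ →
      ∀ (hW : ∀ x ∈ W, (T₂ ∘ₗ T₁) x ∈ W) (hW₁ : ∀ x ∈ W₁, T₁ x ∈ W₁)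
        (hW₂ : ∀ x ∈ W₂, T₂ x ∈ W₂),
        LinearMap.det ((T₂ ∘ₗ T₁).restrict hW) =
          LinearMap.det (T₂.restrict hW₂) * LinearMap.det (T₁.restrict hW₁)) := by
  refine ⟨finiteDimensional_of_le (range_id_sub_comp_le T₁ T₂), ?_⟩
  intro W W₁ W₂ _ _ _ hr hr₁ hr₂ hW hW₁ hW₂
  let V := W ⊔ W₁ ⊔ W₂
  have hWV : W ≤ V := le_sup_left.trans le_sup_left
  have hW₁V : W₁ ≤ V := le_sup_right.trans le_sup_left
  have hW₂V : W₂ ≤ V := le_sup_right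
  have hV₁ := mapsTo_of_range_id_sub_le (hr₁.trans hW₁V)
  have hV₂ := mapsTo_of_range_id_sub_le (hr₂.trans hW₂V)
  rw [← det_restrict_eq_of_le hWV hr hW (mapsTo_of_range_id_sub_le (hr.trans hWV)),
    ← det_restrict_eq_of_le hW₁V hr₁ hW₁ hV₁, ← det_restrict_eq_of_le hW₂V hr₂ hW₂ hV₂,
    ← LinearMap.det_comp, restrict_comp hV₁ hV₂]
end

section
/- Let E₁ and E₂ be real vector spaces with E₂ finite-dimensional, let E = E₁ × E₂, and let T : E → E be a linear map of the block-triangular form T(x₁, x₂) = (x₁ + T₁₂x₂, T₂₂x₂), where T₁₂ : E₂ → E₁ and T₂₂ : E₂ → E₂ are linear. Then T is admissible (range(id_E − T) is finite-dimensional) and det T = det T₂₂; explicitly, for any finite-dimensional subspace W of E containing range(id_E − T), the determinant of the restriction of T to W equals the determinant of T₂₂. -/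
/-!
If `range (id - f) ≤ V ≤ U` with `U` finite-dimensional, then `f` induces the identity on `U ⧸ V`,
so `det (f|U) = det (f|V)`; comparing two such subspaces through their sup shows that the
determinant of the restriction does not depend on the subspace. For the block-triangular `T` take
the subspace `range T₁₂ × E₂`, on which `T` has block matrix `[[1, T₁₂], [0, T₂₂]]`.
-/

/-- The determinant of an admissible endomorphism `S` (one with `range (id − S)`
finite-dimensional): the determinant of the restriction of `S` to any finite-dimensional
subspace containing `range (id − S)`, here the minimal one. -/
noncomputable def admDet {E : Type*} [AddCommGroup E] [Module ℝ E] (S : E →ₗ[ℝ] E) : ℝ :=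
  LinearMap.det (S.restrict
    (p := LinearMap.range ((LinearMap.id : E →ₗ[ℝ] E) - S))
    (q := LinearMap.range ((LinearMap.id : E →ₗ[ℝ] E) - S))
    (fun x hx => by
      have h1 : ((LinearMap.id : E →ₗ[ℝ] E) - S) x ∈
          LinearMap.range ((LinearMap.id : E →ₗ[ℝ] E) - S) :=
        LinearMap.mem_range_self _ x
      have h2 : S x = x - ((LinearMap.id : E →ₗ[ℝ] E) - S) x := by
        simp
      rw [h2]
      exact Submodule.sub_mem _ hx h1))

namespace LinearMap

variable {K M : Type*} [Field K] [AddCommGroup M] [Module K M]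

theorem map_mem_of_range_id_sub_le {f : M →ₗ[K] M} {p : Submodule K M}
    (h : range (id - f) ≤ p) : ∀ x ∈ p, f x ∈ p := fun x hx => by
  simpa using p.sub_mem hx (h (mem_range_self (id - f) x))

theorem det_eq_det_restrict_of_range_id_sub_le_s7 [FiniteDimensional K M] {f : M →ₗ[K] M}
    {p : Submodule K M} (h : range (id - f) ≤ p) (hp : ∀ x ∈ p, f x ∈ p) :
    LinearMap.det f = LinearMap.det (f.restrict hp) := by
  have hq : p.mapQ p f hp = id := by
    ext x
    simpa [Submodule.Quotient.eq] using p.neg_mem (h (mem_range_self (id - f) x))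
  rw [det_eq_det_mul_det p f hp, hq, det_id, mul_one]

theorem det_restrict_eq_of_le_s7 {f : M →ₗ[K] M} {V U : Submodule K M} [FiniteDimensional K U]
    (hVU : V ≤ U) (h : range (id - f) ≤ V) (hV : ∀ x ∈ V, f x ∈ V) (hU : ∀ x ∈ U, f x ∈ U) :
    LinearMap.det (f.restrict hV) = LinearMap.det (f.restrict hU) := by
  set V' := V.comap U.subtype
  have hV' : ∀ y ∈ V', f.restrict hU y ∈ V' := fun y hy => hV y hy
  have h' : range (id - f.restrict hU) ≤ V' := by
    rintro _ ⟨y, rfl⟩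
    exact h (mem_range_self (id - f) (y : M))
  rw [det_eq_det_restrict_of_range_id_sub_le_s7 h' hV',
    ← det_conj ((f.restrict hU).restrict hV') (Submodule.comapSubtypeEquivOfLe hVU)]
  rfl

theorem det_restrict_eq_det_restrict {f : M →ₗ[K] M} {W₁ W₂ : Submodule K M}
    [FiniteDimensional K W₁] [FiniteDimensional K W₂]
    (h₁ : range (id - f) ≤ W₁) (h₂ : range (id - f) ≤ W₂)
    (hW₁ : ∀ x ∈ W₁, f x ∈ W₁) (hW₂ : ∀ x ∈ W₂, f x ∈ W₂) :
    LinearMap.det (f.restrict hW₁) = LinearMap.det (f.restrict hW₂) := by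
  have hU := map_mem_of_range_id_sub_le (h₁.trans (le_sup_left : W₁ ≤ W₁ ⊔ W₂))
  rw [det_restrict_eq_of_le_s7 le_sup_left h₁ hW₁ hU, det_restrict_eq_of_le_s7 le_sup_right h₂ hW₂ hU]

theorem det_restrict_range_eq {N : Type*} [AddCommGroup N] [Module K N] {f : M →ₗ[K] M}
    {g : N →ₗ[K] N} {φ : N →ₗ[K] M}
    (hφ : Function.Injective φ) (hfg : ∀ y, f (φ y) = φ (g y))
    (h : ∀ x ∈ range φ, f x ∈ range φ) :
    LinearMap.det (f.restrict h) = LinearMap.det g := by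
  rw [← det_conj g (LinearEquiv.ofInjective φ hφ)]
  congr 1
  ext ⟨_, y, rfl⟩
  have hy : (⟨φ y, mem_range_self φ y⟩ : range φ) = LinearEquiv.ofInjective φ hφ y := rfl
  simp [hy, hfg]

theorem det_prod_comp_fst_add_comp_snd {R P Q : Type*} [CommRing R]
    [AddCommGroup P] [Module R P] [Module.Free R P] [Module.Finite R P]
    [AddCommGroup Q] [Module R Q] [Module.Free R Q] [Module.Finite R Q]
    (A : P →ₗ[R] P) (B : Q →ₗ[R] P) (D : Q →ₗ[R] Q) :
    LinearMap.det ((A ∘ₗ fst R P Q + B ∘ₗ snd R P Q).prod (D ∘ₗ snd R P Q)) =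
      LinearMap.det A * LinearMap.det D := by
  classical
  let bP := Module.Free.chooseBasis R P
  let bQ := Module.Free.chooseBasis R Q
  rw [← det_toMatrix (bP.prod bQ), ← det_toMatrix bP A, ← det_toMatrix bQ D,
    ← Matrix.det_fromBlocks_zero₂₁ (toMatrix bP bP A) (toMatrix bQ bP B) (toMatrix bQ bQ D)]
  congr 1
  ext (i | i) (j | j) <;> simp [toMatrix_apply, Matrix.fromBlocks]

end LinearMap

open LinearMap

/-- A block-triangular linear map `T(x₁, x₂) = (x₁ + T₁₂x₂, T₂₂x₂)` on `E = E₁ × E₂` with `E₂`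
finite-dimensional is admissible and `det T = det T₂₂`; explicitly, the determinant of the
restriction of `T` to any finite-dimensional subspace containing `range (id − T)` is `det T₂₂`. -/
theorem block_triangular_admissible_det
    {E₁ E₂ : Type*} [AddCommGroup E₁] [Module ℝ E₁] [AddCommGroup E₂] [Module ℝ E₂]
    [FiniteDimensional ℝ E₂]
    (T : (E₁ × E₂) →ₗ[ℝ] (E₁ × E₂)) (T₁₂ : E₂ →ₗ[ℝ] E₁) (T₂₂ : E₂ →ₗ[ℝ] E₂)
    (hT : ∀ x : E₁ × E₂, T x = (x.1 + T₁₂ x.2, T₂₂ x.2)) :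
    FiniteDimensional ℝ (LinearMap.range ((LinearMap.id : (E₁ × E₂) →ₗ[ℝ] (E₁ × E₂)) - T)) ∧
    admDet T = LinearMap.det T₂₂ ∧
    (∀ W : Submodule ℝ (E₁ × E₂), FiniteDimensional ℝ W →
      LinearMap.range ((LinearMap.id : (E₁ × E₂) →ₗ[ℝ] (E₁ × E₂)) - T) ≤ W →
      ∀ (hW : ∀ x ∈ W, T x ∈ W),
        LinearMap.det (T.restrict hW) = LinearMap.det T₂₂) := by
  -- `T` preserves `range T₁₂ × E₂`, embedded by `φ`, and acts there by the block-triangular `T'`.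
  let φ := (range T₁₂).subtype.prodMap (LinearMap.id : E₂ →ₗ[ℝ] E₂)
  let T' := (LinearMap.id ∘ₗ fst ℝ _ E₂ + T₁₂.rangeRestrict ∘ₗ snd ℝ _ E₂).prod
    (T₂₂ ∘ₗ snd ℝ (range T₁₂) E₂)
  have hφ : Function.Injective φ := Subtype.val_injective.prodMap Function.injective_id
  have hTφ : ∀ y, T (φ y) = φ (T' y) := fun y => by simp [φ, T', hT]
  have hR : range (LinearMap.id - T) ≤ range φ := by
    rintro _ ⟨x, rfl⟩
    exact ⟨(-T₁₂.rangeRestrict x.2, x.2 - T₂₂ x.2), by ext <;> simp [φ, hT]⟩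
  have hdet : ∀ W : Submodule ℝ (E₁ × E₂), FiniteDimensional ℝ W → range (LinearMap.id - T) ≤ W →
      ∀ hW : ∀ x ∈ W, T x ∈ W, LinearMap.det (T.restrict hW) = LinearMap.det T₂₂ := by
    intro W _ hRW hW
    rw [det_restrict_eq_det_restrict hRW hR hW (map_mem_of_range_id_sub_le hR),
      det_restrict_range_eq hφ hTφ, det_prod_comp_fst_add_comp_snd, det_id, one_mul]
  have : FiniteDimensional ℝ (range (LinearMap.id - T)) := Submodule.finiteDimensional_of_le hR
  exact ⟨this, hdet _ this le_rfl _, hdet⟩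
end

section
/- Let E and F be real vector spaces, T : E → F a linear map, and let K₁, K₂ : E → F be companions of T, i.e. finite-rank linear maps such that T + K₁ and T + K₂ are bijective. Then the four linear endomorphisms (T+K₂)⁻¹(T+K₁) and (T+K₁)(T+K₂)⁻¹ (of E and F respectively), and (T+K₁)⁻¹(T+K₂) and (T+K₂)(T+K₁)⁻¹ (of E and F respectively), are all admissible; the first two have equal determinants, the last two have equal determinants, and all four determinants have the same sign. -/
open Classical in
/-- Inverse of a bijective linear map (junk value `0` otherwise). -/
noncomputable def linInv {E F : Type*} [AddCommGroup E] [Module ℝ E] [AddCommGroup F] [Module ℝ F]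
    (f : E →ₗ[ℝ] F) : F →ₗ[ℝ] E :=
  if h : Function.Bijective ⇑f then ((LinearEquiv.ofBijective f h).symm : F →ₗ[ℝ] E) else 0

/-!
Write `A = T + K₁` and `B = T + K₂`. Then `id − B⁻¹A = B⁻¹(K₂ − K₁)` has finite rank, and
`AB⁻¹ = B (B⁻¹A) B⁻¹` is conjugate to `B⁻¹A`; conjugation carries the finite-dimensional subspace
`range (id − B⁻¹A)` to `range (id − AB⁻¹)` and preserves `admDet`. Since `(B⁻¹A)(A⁻¹B) = id` and
`admDet` is multiplicative, the two determinants on `E` are inverse to each other, hence have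
the same sign. Multiplicativity rests on computing `admDet S` on any finite-dimensional subspace
`V ⊇ range (id − S)`: `det S = det (S|V) · det (S mod V)`, and `S` induces the identity on `E ⧸ V`.
-/

open LinearMap

section Ring

variable {R M N : Type*} [CommRing R] [AddCommGroup M] [Module R M] [AddCommGroup N] [Module R N]

theorem Submodule.le_comap_of_range_id_sub_le {f : M →ₗ[R] M} {p : Submodule R M}
    (h : range (LinearMap.id - f) ≤ p) : p ≤ p.comap f := fun x hx => by
  simpa using sub_mem hx (h (mem_range_self _ x))

theorem Submodule.mapQ_eq_id_of_range_id_sub_le {f : M →ₗ[R] M} {p : Submodule R M}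
    (h : range (LinearMap.id - f) ≤ p) :
    p.mapQ p f (p.le_comap_of_range_id_sub_le h) = LinearMap.id := by
  ext x
  simpa [Submodule.Quotient.eq] using neg_mem (h (mem_range_self _ x))

theorem LinearMap.det_eq_det_restrict_of_range_id_sub_le_s8 [Module.Finite R M] (f : M →ₗ[R] M)
    {p : Submodule R M} [Module.Free R p] [Module.Finite R p] [Module.Free R (M ⧸ p)]
    (h : range (LinearMap.id - f) ≤ p) :
    LinearMap.det f = LinearMap.det (f.restrict (p.le_comap_of_range_id_sub_le h)) := by
  rw [det_eq_det_mul_det p f, p.mapQ_eq_id_of_range_id_sub_le h, det_id, mul_one]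

theorem LinearMap.range_id_sub_comp_le_s8 (S₁ S₂ : M →ₗ[R] M) :
    range (LinearMap.id - S₁ ∘ₗ S₂) ≤
      range (LinearMap.id - S₁) ⊔ range (LinearMap.id - S₂) := by
  have : LinearMap.id - S₁ ∘ₗ S₂ = (LinearMap.id - S₁) ∘ₗ S₂ + (LinearMap.id - S₂) := by
    ext; simp
  rw [this]
  exact (range_add_le _ _).trans (sup_le_sup_right (range_comp_le_range S₂ _) _)

theorem LinearMap.range_id_sub_conj (S : M →ₗ[R] M) (e : M ≃ₗ[R] N) :
    range (LinearMap.id - (e : M →ₗ[R] N) ∘ₗ S ∘ₗ (e.symm : N →ₗ[R] M)) =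
      (range (LinearMap.id - S)).map (e : M →ₗ[R] N) := by
  have : LinearMap.id - (e : M →ₗ[R] N) ∘ₗ S ∘ₗ (e.symm : N →ₗ[R] M) =
      (e : M →ₗ[R] N) ∘ₗ (LinearMap.id - S) ∘ₗ (e.symm : N →ₗ[R] M) := by
    ext; simp
  rw [this, range_comp, range_comp_of_range_eq_top _ e.symm.range]

theorem LinearMap.range_id_sub_symm_comp (A : M →ₗ[R] N) (B : M ≃ₗ[R] N) :
    range (LinearMap.id - (B.symm : N →ₗ[R] M) ∘ₗ A) =
      (range ((B : M →ₗ[R] N) - A)).map (B.symm : N →ₗ[R] M) := by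
  rw [← range_comp]
  congr 1
  ext
  simp

theorem LinearMap.comp_symm_eq_conj (A : M →ₗ[R] N) (B : M ≃ₗ[R] N) :
    A ∘ₗ (B.symm : N →ₗ[R] M) =
      (B : M →ₗ[R] N) ∘ₗ ((B.symm : N →ₗ[R] M) ∘ₗ A) ∘ₗ (B.symm : N →ₗ[R] M) := by
  ext
  simp

end Ring

theorem LinearMap.finiteDimensional_range_sub {K V W : Type*} [Field K] [AddCommGroup V]
    [Module K V] [AddCommGroup W] [Module K W] (f g : V →ₗ[K] W)
    [FiniteDimensional K (range f)] [FiniteDimensional K (range g)] :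
    FiniteDimensional K (range (f - g)) :=
  Submodule.finiteDimensional_of_le (S₂ := range f ⊔ range g) <| by
    simpa only [sub_eq_add_neg, range_neg] using range_add_le f (-g)

section AdmDet

variable {E F : Type*} [AddCommGroup E] [Module ℝ E] [AddCommGroup F] [Module ℝ F]

theorem linInv_of_bijective {f : E →ₗ[ℝ] F} (hf : Function.Bijective f) :
    linInv f = ((LinearEquiv.ofBijective f hf).symm : F →ₗ[ℝ] E) :=
  dif_pos hf

theorem admDet_eq_det_restrict (S : E →ₗ[ℝ] E) {p : Submodule ℝ E} [FiniteDimensional ℝ p]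
    (h : range (LinearMap.id - S) ≤ p) :
    admDet S = LinearMap.det (S.restrict (p.le_comap_of_range_id_sub_le h)) := by
  set V := range (LinearMap.id - S)
  set f := S.restrict (p.le_comap_of_range_id_sub_le h)
  have hf : range (LinearMap.id - f) ≤ V.comap p.subtype := by
    rintro _ ⟨x, rfl⟩
    exact mem_range_self _ (x : E)
  rw [f.det_eq_det_restrict_of_range_id_sub_le_s8 hf]
  have : FiniteDimensional ℝ V := Submodule.finiteDimensional_of_le h
  let e := Submodule.comapSubtypeEquivOfLe h
  have hconj : S.restrict (V.le_comap_of_range_id_sub_le le_rfl) =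
      (e : V.comap p.subtype →ₗ[ℝ] V) ∘ₗ
        f.restrict ((V.comap p.subtype).le_comap_of_range_id_sub_le hf) ∘ₗ
        (e.symm : V →ₗ[ℝ] V.comap p.subtype) := by
    ext; rfl
  rw [admDet, ← det_conj _ e]
  exact congrArg LinearMap.det hconj

theorem admDet_id : admDet (LinearMap.id : E →ₗ[ℝ] E) = 1 :=
  LinearMap.det_id

theorem admDet_comp (S₁ S₂ : E →ₗ[ℝ] E) [FiniteDimensional ℝ (range (LinearMap.id - S₁))]
    [FiniteDimensional ℝ (range (LinearMap.id - S₂))] :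
    admDet (S₁ ∘ₗ S₂) = admDet S₁ * admDet S₂ := by
  set p := range (LinearMap.id - S₁) ⊔ range (LinearMap.id - S₂)
  rw [admDet_eq_det_restrict _ (range_id_sub_comp_le_s8 S₁ S₂),
    admDet_eq_det_restrict S₁ (le_sup_left : _ ≤ p),
    admDet_eq_det_restrict S₂ (le_sup_right : _ ≤ p), ← LinearMap.det_comp]
  rfl

theorem admDet_conj (S : E →ₗ[ℝ] E) (e : E ≃ₗ[ℝ] F)
    [FiniteDimensional ℝ (range (LinearMap.id - S))] :
    admDet ((e : E →ₗ[ℝ] F) ∘ₗ S ∘ₗ (e.symm : F →ₗ[ℝ] E)) = admDet S := by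
  rw [admDet_eq_det_restrict _ (range_id_sub_conj S e).le, admDet_eq_det_restrict S le_rfl,
    ← LinearMap.det_conj _ (e.submoduleMap _)]
  congr 1

variable (A : E →ₗ[ℝ] F) (B : E ≃ₗ[ℝ] F) [FiniteDimensional ℝ (range ((B : E →ₗ[ℝ] F) - A))]

instance finiteDimensional_range_id_sub_symm_comp :
    FiniteDimensional ℝ (range (LinearMap.id - (B.symm : F →ₗ[ℝ] E) ∘ₗ A)) := by
  rw [range_id_sub_symm_comp]
  infer_instance

instance finiteDimensional_range_id_sub_comp_symm :
    FiniteDimensional ℝ (range (LinearMap.id - A ∘ₗ (B.symm : F →ₗ[ℝ] E))) := by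
  rw [comp_symm_eq_conj, range_id_sub_conj]
  infer_instance

theorem admDet_comp_symm :
    admDet (A ∘ₗ (B.symm : F →ₗ[ℝ] E)) = admDet ((B.symm : F →ₗ[ℝ] E) ∘ₗ A) := by
  rw [comp_symm_eq_conj, admDet_conj]

end AdmDet

/-- If `K₁, K₂` are companions of `T : E → F` (finite-rank maps with `T + K₁`, `T + K₂`
bijective), then the four endomorphisms `(T+K₂)⁻¹(T+K₁)`, `(T+K₁)(T+K₂)⁻¹`, `(T+K₁)⁻¹(T+K₂)`,
`(T+K₂)(T+K₁)⁻¹` are admissible, the first two have equal determinants, the last two have equal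
determinants, and all four determinants have the same sign. -/
theorem companions_four_determinants
    {E F : Type*} [AddCommGroup E] [Module ℝ E] [AddCommGroup F] [Module ℝ F]
    (T K₁ K₂ : E →ₗ[ℝ] F)
    (hr₁ : FiniteDimensional ℝ (LinearMap.range K₁))
    (hr₂ : FiniteDimensional ℝ (LinearMap.range K₂))
    (hb₁ : Function.Bijective ⇑(T + K₁)) (hb₂ : Function.Bijective ⇑(T + K₂)) :
    FiniteDimensional ℝ (LinearMap.range
      ((LinearMap.id : E →ₗ[ℝ] E) - linInv (T + K₂) ∘ₗ (T + K₁))) ∧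
    FiniteDimensional ℝ (LinearMap.range
      ((LinearMap.id : F →ₗ[ℝ] F) - (T + K₁) ∘ₗ linInv (T + K₂))) ∧
    FiniteDimensional ℝ (LinearMap.range
      ((LinearMap.id : E →ₗ[ℝ] E) - linInv (T + K₁) ∘ₗ (T + K₂))) ∧
    FiniteDimensional ℝ (LinearMap.range
      ((LinearMap.id : F →ₗ[ℝ] F) - (T + K₂) ∘ₗ linInv (T + K₁))) ∧
    admDet (linInv (T + K₂) ∘ₗ (T + K₁)) = admDet ((T + K₁) ∘ₗ linInv (T + K₂)) ∧
    admDet (linInv (T + K₁) ∘ₗ (T + K₂)) = admDet ((T + K₂) ∘ₗ linInv (T + K₁)) ∧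
    Real.sign (admDet (linInv (T + K₂) ∘ₗ (T + K₁))) =
      Real.sign (admDet (linInv (T + K₁) ∘ₗ (T + K₂))) := by
  set A₁ := LinearEquiv.ofBijective (T + K₁) hb₁
  set A₂ := LinearEquiv.ofBijective (T + K₂) hb₂
  rw [linInv_of_bijective hb₁, linInv_of_bijective hb₂]
  have : FiniteDimensional ℝ (range ((A₂ : E →ₗ[ℝ] F) - (T + K₁))) := by
    rw [show (A₂ : E →ₗ[ℝ] F) - (T + K₁) = K₂ - K₁ from add_sub_add_left_eq_sub _ _ _]
    exact finiteDimensional_range_sub K₂ K₁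
  have : FiniteDimensional ℝ (range ((A₁ : E →ₗ[ℝ] F) - (T + K₂))) := by
    rw [show (A₁ : E →ₗ[ℝ] F) - (T + K₂) = K₁ - K₂ from add_sub_add_left_eq_sub _ _ _]
    exact finiteDimensional_range_sub K₁ K₂
  have hinv : ((A₂.symm : F →ₗ[ℝ] E) ∘ₗ (T + K₁)) ∘ₗ ((A₁.symm : F →ₗ[ℝ] E) ∘ₗ (T + K₂)) =
      LinearMap.id :=
    LinearMap.ext fun x => show A₂.symm (A₁ (A₁.symm (A₂ x))) = x by simp
  have hprod : admDet ((A₂.symm : F →ₗ[ℝ] E) ∘ₗ (T + K₁)) *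
      admDet ((A₁.symm : F →ₗ[ℝ] E) ∘ₗ (T + K₂)) = 1 := by
    rw [← admDet_comp, hinv, admDet_id]
  refine ⟨inferInstance, inferInstance, inferInstance, inferInstance,
    (admDet_comp_symm _ _).symm, (admDet_comp_symm _ _).symm, ?_⟩
  rw [eq_inv_of_mul_eq_one_right hprod, Real.sign_inv]
end

section
/- Let E and F be real normed spaces, D a subset of E, and f, g : D → F continuous maps. Assume that for every closed bounded subset A of D the restriction of f to A is proper (the preimage under f|_A of every compact subset of F is compact), and that g maps bounded subsets of D to relatively compact subsets of F. Then for every closed bounded subset A of D the restriction of f + g to A is proper. -/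
open Pointwise

/-- If `f : D → F` is proper on every closed bounded subset of `D ⊆ E` and `g : D → F` maps
bounded sets to relatively compact sets, then `f + g` is proper on every closed bounded subset
of `D`. -/
theorem sum_with_compact_map_proper_on_closed_bounded
    {E F : Type*} [NormedAddCommGroup E] [NormedSpace ℝ E]
    [NormedAddCommGroup F] [NormedSpace ℝ F]
    (D : Set E) (f g : D → F) (hf : Continuous f) (hg : Continuous g)
    (hfp : ∀ A : Set D, IsClosed (Subtype.val '' A : Set E) →
      Bornology.IsBounded (Subtype.val '' A : Set E) →
      ∀ Kc : Set F, IsCompact Kc → IsCompact (A ∩ f ⁻¹' Kc))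
    (hgc : ∀ B : Set D, Bornology.IsBounded (Subtype.val '' B : Set E) →
      IsCompact (closure (g '' B))) :
    ∀ A : Set D, IsClosed (Subtype.val '' A : Set E) →
      Bornology.IsBounded (Subtype.val '' A : Set E) →
      ∀ Kc : Set F, IsCompact Kc →
        IsCompact (A ∩ (fun x => f x + g x) ⁻¹' Kc) := by
  intro A hAc hAb Kc hKc
  have hL : IsCompact (closure (g '' A)) := hgc A hAb
  have hK' : IsCompact (Kc - closure (g '' A)) := by
    rw [show Kc - closure (g '' A) = Kc + -closure (g '' A) from sub_eq_add_neg _ _]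
    exact hKc.add hL.neg
  have hsub : A ∩ (fun x => f x + g x) ⁻¹' Kc ⊆ A ∩ f ⁻¹' (Kc - closure (g '' A)) := by
    rintro x ⟨hxA, hxK⟩
    refine ⟨hxA, ?_⟩
    exact ⟨f x + g x, hxK, g x, subset_closure ⟨x, hxA, rfl⟩, add_sub_cancel_right _ _⟩
  have hcomp := hfp A hAc hAb _ hK'
  have hAclosed : IsClosed A := by
    have h := hAc.preimage (continuous_subtype_val : Continuous ((↑) : D → E))
    rwa [Subtype.val_injective.preimage_image] at h
  have hSclosed : IsClosed (A ∩ (fun x => f x + g x) ⁻¹' Kc) :=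
    hAclosed.inter (hKc.isClosed.preimage (hf.add hg))
  exact hcomp.of_isClosed_subset hSclosed hsub
end

section
/- Let G and H be real Hilbert spaces, let L : G → H be a bounded linear operator with finite-dimensional kernel and finite-dimensional cokernel H/range(L) (i.e. L is Fredholm), let C : G → H be a compact bounded linear operator, and let N : G → H be a continuous map whose image of the unit sphere S = {x ∈ G : ‖x‖ = 1} is relatively compact in H. Define Ψ⁺ : ℝ × ℝ × S → H by Ψ⁺(s, λ, x) = Lx + sN(x) − λCx. Then Ψ⁺ is proper on every bounded and closed subset of ℝ × ℝ × S: if A ⊆ ℝ × ℝ × S is bounded and closed in ℝ × ℝ × G, then the preimage under Ψ⁺|_A of every compact subset of H is compact. -/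
/-!
A Fredholm operator `L` between Banach spaces satisfies `x = P x + S (L x)` with `P` a continuous
projection onto its finite-dimensional kernel and `S` continuous (open mapping theorem for
`(m, f) ↦ L m + f` on a complement of the kernel times a complement of the range). Hence `L` is
proper on bounded closed sets. If `Ψ⁺(s, λ, x) ∈ K` with `|s|, |λ| ≤ R` and `‖x‖ = 1`, then
`L x = Ψ⁺(s, λ, x) - s N x + λ C x` lies in the compact set
`K + [-R, R] • closure (N '' S) + [-R, R] • closure (C '' closedBall 0 1)`.
-/

open Function Metric Bornology Pointwise

theorem LinearMap.bijective_coprod_of_isCompl {R M₁ M₂ : Type*} [Ring R] [AddCommGroup M₁]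
    [Module R M₁] [AddCommGroup M₂] [Module R M₂] (L : M₁ →ₗ[R] M₂) {V : Submodule R M₁}
    {W : Submodule R M₂} (hV : IsCompl V (LinearMap.ker L)) (hW : IsCompl (LinearMap.range L) W) :
    Bijective ((L ∘ₗ V.subtype).coprod W.subtype) := by
  let e : V ≃ₗ[R] LinearMap.range L :=
    ((LinearMap.ker L).quotientEquivOfIsCompl V hV.symm).symm ≪≫ₗ L.quotKerEquivRange
  have : (L ∘ₗ V.subtype).coprod W.subtype = (Submodule.prodEquivOfIsCompl _ _ hW).toLinearMap ∘ₗ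
      (e.prodCongr (.refl R W)).toLinearMap := by
    ext <;> simp [e]
  rw [this, LinearMap.coe_comp, LinearEquiv.coe_coe, LinearEquiv.coe_coe]
  exact (LinearEquiv.bijective _).comp (LinearEquiv.bijective _)

namespace ContinuousLinearMap

variable {𝕜 E F : Type*} [RCLike 𝕜] [NormedAddCommGroup E] [NormedSpace 𝕜 E] [CompleteSpace E]
  [NormedAddCommGroup F] [NormedSpace 𝕜 F] [CompleteSpace F] (L : E →L[𝕜] F)
  [FiniteDimensional 𝕜 (LinearMap.ker (L : E →ₗ[𝕜] F))]
  [FiniteDimensional 𝕜 (F ⧸ LinearMap.range (L : E →ₗ[𝕜] F))]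

theorem exists_ker_proj_add_comp_eq_self :
    ∃ (P : E →L[𝕜] LinearMap.ker (L : E →ₗ[𝕜] F)) (S : F →L[𝕜] E),
      ∀ x, (P x : E) + S (L x) = x := by
  obtain ⟨P, hP⟩ :=
    Submodule.ClosedComplemented.of_finiteDimensional (LinearMap.ker (L : E →ₗ[𝕜] F))
  obtain ⟨W, hW⟩ := (LinearMap.range (L : E →ₗ[𝕜] F)).exists_isCompl
  have : FiniteDimensional 𝕜 W := (Submodule.quotientEquivOfIsCompl _ W hW).finiteDimensional
  set V := LinearMap.ker (P : E →ₗ[𝕜] LinearMap.ker (L : E →ₗ[𝕜] F))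
  have : CompleteSpace V := P.isClosed_ker.completeSpace_coe
  have hT := LinearMap.bijective_coprod_of_isCompl (L : E →ₗ[𝕜] F)
    (LinearMap.isCompl_of_proj hP).symm hW
  let T := ContinuousLinearEquiv.ofBijective ((L ∘L V.subtypeL).coprod W.subtypeL)
    (LinearMap.ker_eq_bot.2 hT.1) (LinearMap.range_eq_top.2 hT.2)
  refine ⟨P, V.subtypeL ∘L fst 𝕜 V W ∘L T.symm.toContinuousLinearMap, fun x => ?_⟩
  have hxV : x - P x ∈ V := by simp [V, hP]
  have : T.symm (L x) = (⟨_, hxV⟩, 0) := by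
    rw [ContinuousLinearEquiv.symm_apply_eq]
    simp [T]
  simp [this]

theorem isCompact_preimage_inter_of_isBounded {Z : Set F} (hZ : IsCompact Z) {B : Set E}
    (hB : IsBounded B) (hBc : IsClosed B) : IsCompact (L ⁻¹' Z ∩ B) := by
  obtain ⟨P, S, hPS⟩ := L.exists_ker_proj_add_comp_eq_self
  have hPB : IsCompact (closure (P '' B)) := (P.lipschitz.isBounded_image hB).isCompact_closure
  refine ((hPB.image continuous_subtype_val).add (hZ.image S.continuous)).of_isClosed_subset
    ((hZ.isClosed.preimage L.continuous).inter hBc) ?_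
  rintro x ⟨hxZ, hxB⟩
  rw [← hPS x]
  exact Set.add_mem_add ⟨P x, subset_closure ⟨x, hxB, rfl⟩, rfl⟩ ⟨L x, hxZ, rfl⟩

end ContinuousLinearMap

/-- With `L : G → H` Fredholm, `C` compact and `N` continuous with `N(S)` relatively compact
(`S` the unit sphere of `G`), the map `Ψ⁺(s, λ, x) = Lx + sN(x) − λCx` is proper on every
bounded and closed subset of `ℝ × ℝ × S`. -/
theorem perturbed_map_proper_on_bounded_closed
    {G H : Type*} [NormedAddCommGroup G] [InnerProductSpace ℝ G] [CompleteSpace G]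
    [NormedAddCommGroup H] [InnerProductSpace ℝ H] [CompleteSpace H]
    (L C : G →L[ℝ] H)
    (hkerL : FiniteDimensional ℝ (LinearMap.ker (L : G →ₗ[ℝ] H)))
    (hcokerL : FiniteDimensional ℝ (H ⧸ LinearMap.range (L : G →ₗ[ℝ] H)))
    (hC : IsCompactOperator ⇑C)
    (N : G → H) (hN : Continuous N)
    (hNcpt : IsCompact (closure (N '' Metric.sphere (0 : G) 1))) :
    ∀ A : Set (ℝ × ℝ × G), (∀ p ∈ A, ‖p.2.2‖ = 1) →
      Bornology.IsBounded A → IsClosed A →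
      ∀ Kc : Set H, IsCompact Kc →
        IsCompact (A ∩ (fun p : ℝ × ℝ × G =>
          L p.2.2 + p.1 • N p.2.2 - p.2.1 • C p.2.2) ⁻¹' Kc) := by
  intro A hA_sphere hA_bdd hA_closed Kc hKc
  obtain ⟨R, hR⟩ := isBounded_iff_forall_norm_le.mp hA_bdd
  set I := closedBall (0 : ℝ) R
  have hI : IsCompact I := isCompact_closedBall _ _
  set Z := Kc + I • closure (N '' sphere 0 1) + I • closure (C '' closedBall 0 1)
  have hZ : IsCompact Z := (hKc.add (hI.smul_set hNcpt)).add
    (hI.smul_set (hC.isCompact_closure_image_closedBall 1))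
  have hΨ : Continuous fun p : ℝ × ℝ × G => L p.2.2 + p.1 • N p.2.2 - p.2.1 • C p.2.2 := by
    fun_prop
  have := hkerL
  have := hcokerL
  refine (hI.prod <| hI.prod <| L.isCompact_preimage_inter_of_isBounded hZ isBounded_sphere
    (isClosed_sphere (x := 0) (ε := 1))).of_isClosed_subset
    (hA_closed.inter (hKc.isClosed.preimage hΨ)) ?_
  rintro ⟨s, μ, x⟩ ⟨hpA, hpK⟩
  have hx : x ∈ sphere (0 : G) 1 := mem_sphere_zero_iff_norm.2 (hA_sphere _ hpA)
  have hs : s ∈ I := mem_closedBall_zero_iff.2 ((norm_fst_le _).trans (hR _ hpA))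
  have hμ : μ ∈ I := mem_closedBall_zero_iff.2
    ((norm_fst_le (μ, x)).trans ((norm_snd_le (s, μ, x)).trans (hR _ hpA)))
  have hLx : L x = (L x + s • N x - μ • C x) + (-s) • N x + μ • C x := by
    rw [neg_smul]; abel
  refine ⟨hs, hμ, ?_, hx⟩
  rw [Set.mem_preimage, hLx]
  exact Set.add_mem_add
    (Set.add_mem_add hpK (Set.smul_mem_smul (by simpa [I] using hs) (subset_closure ⟨x, hx, rfl⟩)))
    (Set.smul_mem_smul hμ (subset_closure ⟨x, sphere_subset_closedBall hx, rfl⟩))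
end

section
/- For every positive integer n there is no twice differentiable function x : ℝ → ℝ satisfying x''(t) + n²·x(t) = sin(nt) for all t ∈ [0, π] together with the boundary conditions x(0) = 0 and x(π) = 0. -/
/-!
The function `x' sin(nt) - n x cos(nt)` has derivative `(x'' + n² x) sin(nt)`, which equals
`sin² (nt)` on `[0, π]` for a solution, and it vanishes at `0` and `π` by the boundary conditions.
Integrating over `[0, π]` would give `0 = ∫ sin² (nt) = π / 2`.
-/

open Real

theorem integral_sin_nat_mul_sq {n : ℕ} (hn : n ≠ 0) :
    ∫ t in (0 : ℝ)..π, sin (n * t) ^ 2 = π / 2 := by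
  have hn' : (n : ℝ) ≠ 0 := Nat.cast_ne_zero.mpr hn
  rw [intervalIntegral.integral_comp_mul_left (fun t => sin t ^ 2) hn', integral_sin_sq,
    sin_nat_mul_pi]
  simp only [mul_zero, sin_zero, cos_zero, mul_one, zero_mul, sub_self, zero_add, sub_zero,
    smul_eq_mul]
  field_simp

theorem hasDerivAt_deriv_mul_sin_sub_mul_cos {x : ℝ → ℝ} {t : ℝ} (ω : ℝ)
    (hx : DifferentiableAt ℝ x t) (hx' : DifferentiableAt ℝ (deriv x) t) :
    HasDerivAt (fun s => deriv x s * sin (ω * s) - ω * x s * cos (ω * s))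
      ((deriv (deriv x) t + ω ^ 2 * x t) * sin (ω * t)) t := by
  have hωt : HasDerivAt (fun s => ω * s) ω t := by simpa using (hasDerivAt_id t).const_mul ω
  exact ((hx'.hasDerivAt.mul hωt.sin).sub ((hx.hasDerivAt.const_mul ω).mul hωt.cos)).congr_deriv
    (by ring)

open Real in
/-- The resonant Dirichlet problem `x'' + n² x = sin(nt)` on `[0, π]`, `x(0) = 0 = x(π)`, has no
twice differentiable solution, for any positive integer `n`. -/
theorem resonant_dirichlet_unsolvable (n : ℕ) (hn : 0 < n) :
    ¬ ∃ x : ℝ → ℝ, Differentiable ℝ x ∧ Differentiable ℝ (deriv x) ∧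
        (∀ t ∈ Set.Icc 0 π, deriv (deriv x) t + (n : ℝ) ^ 2 * x t = Real.sin (n * t)) ∧
        x 0 = 0 ∧ x π = 0 := by
  rintro ⟨x, hx, hx', hode, h0, hπ⟩
  have hderiv : ∀ t ∈ Set.uIcc 0 π, HasDerivAt
      (fun s => deriv x s * sin (n * s) - n * x s * cos (n * s)) (sin (n * t) ^ 2) t := by
    intro t ht
    rw [Set.uIcc_of_le pi_pos.le] at ht
    have h := hasDerivAt_deriv_mul_sin_sub_mul_cos n (hx t) (hx' t)
    rwa [hode t ht, ← sq] at h
  have hint := intervalIntegral.integral_eq_sub_of_hasDerivAt hderiv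
    ((by fun_prop : Continuous fun t : ℝ => sin (n * t) ^ 2).intervalIntegrable _ _)
  rw [integral_sin_nat_mul_sq hn.ne'] at hint
  simp only [h0, hπ, sin_nat_mul_pi, mul_zero, sin_zero, zero_mul, sub_zero] at hint
  linarith [pi_pos]
end

section
/- Let s, λ ∈ ℝ and consider the system of ordinary differential equations x₁'(t) + x₁(t) − s·x₁(t) = λ·x₂(t), x₂'(t) − x₂(t) − s·x₂(t) = −λ·x₁(t) for t ∈ [0, 2π], with the periodic boundary conditions x₁(0) = x₁(2π) and x₂(0) = x₂(2π). Then: (i) there exists a differentiable solution (x₁, x₂) : ℝ → ℝ² of this boundary value problem not identically zero on [0, 2π] if and only if s² + λ² = 1, or s = 0 and λ² = 1 + n² for some positive integer n; (ii) if s ≠ 0, every differentiable solution of this boundary value problem is constant on [0, 2π]. -/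
/-!
Write the system as `x' = A x` with `A = [[s - 1, λ], [-λ, s + 1]]`, whose eigenvalues are
`s ± ω` with `ω² = 1 - λ²`. For a left eigenvector `(a, b)` of eigenvalue `μ`, the combination
`u = a x₁ + b x₂` solves `u' = μ u`, so `u t = exp (μ t) u 0`, and periodicity forces `u ≡ 0`
unless `exp (2π μ) = 1`, i.e. `μ ∈ iℤ`. For `λ² ≠ 1` the left eigenvectors span `ℂ²`, so a
nontrivial periodic solution needs an eigenvalue `μ = n i`; expanding `(n i - s)² = 1 - λ²` gives
`n s = 0` and `s² + λ² = 1 + n²`, which is the stated condition, and for `s ≠ 0` it leaves only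
`μ = 0`, so every solution is constant. For `λ² = 1` the matrix is a Jordan block with eigenvalue
`s` and the only periodic solution for `s ≠ 0` is zero. Conversely, kernel vectors of `A` and
`(λ cos nt, cos nt - n sin nt)` are nontrivial periodic solutions.
-/

open Real Set

theorem eq_exp_mul_of_hasDerivAt {u : ℝ → ℂ} {μ : ℂ} {T : ℝ}
    (hu : ∀ t ∈ Icc 0 T, HasDerivAt u (μ * u t) t) :
    ∀ t ∈ Icc 0 T, u t = Complex.exp (μ * t) * u 0 := by
  have hderiv (t : ℝ) (ht : t ∈ Icc 0 T) :
      HasDerivAt (fun t : ℝ => Complex.exp (-μ * t) * u t) 0 t := by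
    have hexp : HasDerivAt (fun t : ℝ => Complex.exp (-μ * t)) (Complex.exp (-μ * t) * -μ) t := by
      simpa using ((hasDerivAt_id (t : ℂ)).const_mul (-μ)).cexp.comp_ofReal
    exact (hexp.mul (hu t ht)).congr_deriv (by ring)
  have hconst := constant_of_has_deriv_right_zero
    (fun t ht => (hderiv t ht).continuousAt.continuousWithinAt)
    (fun t ht => (hderiv t (Ico_subset_Icc_self ht)).hasDerivWithinAt)
  intro t ht
  have := hconst t ht
  simp only [Complex.ofReal_zero, mul_zero, Complex.exp_zero, one_mul] at this
  rw [← this, ← mul_assoc, ← Complex.exp_add]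
  simp

theorem exp_eq_one_or_eq_zero_of_hasDerivAt {u : ℝ → ℂ} {μ : ℂ} {T : ℝ}
    (hu : ∀ t ∈ Icc 0 T, HasDerivAt u (μ * u t) t) (hper : u 0 = u T) :
    Complex.exp (μ * T) = 1 ∨ ∀ t ∈ Icc 0 T, u t = 0 := by
  refine or_iff_not_imp_left.2 fun hexp t ht => ?_
  have hT : T ∈ Icc 0 T := ⟨ht.1.trans ht.2, le_rfl⟩
  have hu0 : u 0 = 0 := by
    have h := eq_exp_mul_of_hasDerivAt hu T hT
    rw [← hper] at h
    have h' : (Complex.exp (μ * T) - 1) * u 0 = 0 := by linear_combination -h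
    exact (mul_eq_zero.1 h').resolve_left (sub_ne_zero.2 hexp)
  rw [eq_exp_mul_of_hasDerivAt hu t ht, hu0, mul_zero]

theorem exp_mul_two_pi_eq_one_iff {μ : ℂ} :
    Complex.exp (μ * ↑(2 * π)) = 1 ↔ ∃ n : ℤ, μ = n * Complex.I := by
  have h : ((2 * π : ℝ) : ℂ) ≠ 0 := by exact_mod_cast Real.two_pi_pos.ne'
  rw [Complex.exp_eq_one_iff]
  refine exists_congr fun n => ?_
  rw [← eq_div_iff h]
  push_cast
  constructor <;> intro hn <;> rw [hn] <;> field_simp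

structure IsPeriodicSolution (s lam : ℝ) (x₁ x₂ : ℝ → ℝ) : Prop where
  differentiable_fst : Differentiable ℝ x₁
  differentiable_snd : Differentiable ℝ x₂
  deriv_fst : ∀ t ∈ Icc 0 (2 * π), deriv x₁ t + x₁ t - s * x₁ t = lam * x₂ t
  deriv_snd : ∀ t ∈ Icc 0 (2 * π), deriv x₂ t - x₂ t - s * x₂ t = -lam * x₁ t
  periodic_fst : x₁ 0 = x₁ (2 * π)
  periodic_snd : x₂ 0 = x₂ (2 * π)

/-- `(a, b) A = μ (a, b)` for the coefficient matrix `A = [[s - 1, λ], [-λ, s + 1]]` of the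
system `x' = A x`. -/
def IsLeftEigenpair (s lam : ℝ) (a b μ : ℂ) : Prop :=
  a * (s - 1) - b * lam = μ * a ∧ a * lam + b * (s + 1) = μ * b

theorem isLeftEigenpair_of_sq_eq {s lam : ℝ} {ω : ℂ} (hω : ω ^ 2 = 1 - lam ^ 2) :
    IsLeftEigenpair s lam lam (-(1 + ω)) (s + ω) ∧ IsLeftEigenpair s lam (ω - 1) lam (s + ω) :=
  ⟨⟨by ring, by linear_combination hω⟩, ⟨by linear_combination -hω, by ring⟩⟩

theorem eq_zero_of_forall_isLeftEigenpair {s lam : ℝ} (hlam : lam ^ 2 ≠ 1) {v₁ v₂ : ℂ}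
    (hv : ∀ a b μ, IsLeftEigenpair s lam a b μ → (μ - s) ^ 2 = 1 - lam ^ 2 →
      a * v₁ + b * v₂ = 0) :
    v₁ = 0 ∧ v₂ = 0 := by
  obtain ⟨ω, hω⟩ := IsAlgClosed.exists_eq_mul_self (1 - (lam : ℂ) ^ 2)
  replace hω : ω ^ 2 = 1 - lam ^ 2 := by rw [hω]; ring
  have hω₀ : 2 * ω ≠ 0 := by
    refine mul_ne_zero two_ne_zero fun h => hlam ?_
    rw [h] at hω
    exact_mod_cast (by linear_combination hω : (lam : ℂ) ^ 2 = 1)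
  have hω' : (-ω) ^ 2 = 1 - lam ^ 2 := by rw [neg_sq, hω]
  have hval (ω' : ℂ) (hω' : ω' ^ 2 = 1 - lam ^ 2) :
      lam * v₁ + -(1 + ω') * v₂ = 0 ∧ (ω' - 1) * v₁ + lam * v₂ = 0 := by
    have hμ : (s + ω' - s) ^ 2 = 1 - lam ^ 2 := by rw [add_sub_cancel_left, hω']
    obtain ⟨h₁, h₂⟩ := isLeftEigenpair_of_sq_eq (s := s) hω'
    exact ⟨hv _ _ _ h₁ hμ, hv _ _ _ h₂ hμ⟩
  obtain ⟨hu, hw⟩ := hval ω hω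
  obtain ⟨hu', hw'⟩ := hval (-ω) hω'
  exact ⟨(mul_eq_zero.1 (by linear_combination hw - hw' : 2 * ω * v₁ = 0)).resolve_left hω₀,
    (mul_eq_zero.1 (by linear_combination hu' - hu : 2 * ω * v₂ = 0)).resolve_left hω₀⟩

theorem mul_eq_zero_and_sq_add_sq_eq_of_eq_int_mul_I {s lam : ℝ} {μ : ℂ} {n : ℤ}
    (hμ : (μ - s) ^ 2 = 1 - lam ^ 2) (hn : μ = n * Complex.I) :
    n * s = 0 ∧ s ^ 2 + lam ^ 2 = 1 + n ^ 2 := by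
  subst hn
  have hre := congrArg Complex.re hμ
  have him := congrArg Complex.im hμ
  simp only [sq, Complex.mul_re, Complex.sub_re, Complex.intCast_re, Complex.I_re, mul_zero,
    Complex.intCast_im, Complex.I_im, mul_one, sub_self, Complex.ofReal_re, zero_sub, mul_neg,
    neg_mul, neg_neg, Complex.sub_im, Complex.mul_im, add_zero, Complex.ofReal_im, sub_zero,
    Complex.one_re, Complex.one_im, zero_mul] at hre him
  exact ⟨by linear_combination -him / 2, by linear_combination hre⟩

namespace IsPeriodicSolution

variable {s lam : ℝ} {x₁ x₂ : ℝ → ℝ}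

theorem hasDerivAt_combo (h : IsPeriodicSolution s lam x₁ x₂) (a b : ℂ) {t : ℝ}
    (ht : t ∈ Icc 0 (2 * π)) :
    HasDerivAt (fun t => a * x₁ t + b * x₂ t)
      (a * ((s - 1) * x₁ t + lam * x₂ t) + b * (-lam * x₁ t + (s + 1) * x₂ t)) t := by
  have h₁ : deriv x₁ t = (s - 1) * x₁ t + lam * x₂ t := by linarith [h.deriv_fst t ht]
  have h₂ : deriv x₂ t = -lam * x₁ t + (s + 1) * x₂ t := by linarith [h.deriv_snd t ht]
  have := (((h.differentiable_fst t).hasDerivAt.ofReal_comp.const_mul a).add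
    ((h.differentiable_snd t).hasDerivAt.ofReal_comp.const_mul b))
  rw [h₁, h₂] at this
  exact_mod_cast this

theorem hasDerivAt_combo_of_isLeftEigenpair (h : IsPeriodicSolution s lam x₁ x₂) {a b μ : ℂ}
    (hab : IsLeftEigenpair s lam a b μ) {t : ℝ} (ht : t ∈ Icc 0 (2 * π)) :
    HasDerivAt (fun t => a * x₁ t + b * x₂ t) (μ * (a * x₁ t + b * x₂ t)) t :=
  (h.hasDerivAt_combo a b ht).congr_deriv
    (by linear_combination (x₁ t : ℂ) * hab.1 + (x₂ t : ℂ) * hab.2)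

theorem exists_eq_int_mul_I_or_combo_eq_zero (h : IsPeriodicSolution s lam x₁ x₂) {a b μ : ℂ}
    (hab : IsLeftEigenpair s lam a b μ) :
    (∃ n : ℤ, μ = n * Complex.I) ∨ ∀ t ∈ Icc 0 (2 * π), a * x₁ t + b * x₂ t = 0 := by
  rw [← exp_mul_two_pi_eq_one_iff]
  exact exp_eq_one_or_eq_zero_of_hasDerivAt
    (fun t ht => h.hasDerivAt_combo_of_isLeftEigenpair hab ht)
    (by simp only [h.periodic_fst, h.periodic_snd])

theorem eq_zero_of_sq_eq_one (h : IsPeriodicSolution s lam x₁ x₂) (hs : s ≠ 0)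
    (hlam : lam ^ 2 = 1) : ∀ t ∈ Icc 0 (2 * π), x₁ t = 0 ∧ x₂ t = 0 := by
  have hlamC : (lam : ℂ) ^ 2 = 1 := by exact_mod_cast hlam
  have hs_not_int : ¬∃ n : ℤ, (s : ℂ) = n * Complex.I := fun ⟨n, hn⟩ => hs <| by
    simpa using congrArg Complex.re hn
  have hx₂ : ∀ t ∈ Icc 0 (2 * π), x₂ t = lam * x₁ t := fun t ht => by
    have := ((h.exists_eq_int_mul_I_or_combo_eq_zero (a := lam) (b := -1) (μ := s)
      ⟨by ring, by linear_combination hlamC⟩).resolve_left hs_not_int) t ht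
    exact_mod_cast (by linear_combination -this : (x₂ t : ℂ) = lam * x₁ t)
  have hderiv₁ (t : ℝ) (ht : t ∈ Icc 0 (2 * π)) :
      HasDerivAt (fun t => (x₁ t : ℂ)) (s * x₁ t) t := by
    have := h.hasDerivAt_combo 1 0 ht
    simp only [one_mul, zero_mul, add_zero, hx₂ t ht] at this
    exact this.congr_deriv (by push_cast; linear_combination (x₁ t : ℂ) * hlamC)
  have hx₁ : ∀ t ∈ Icc 0 (2 * π), x₁ t = 0 := by
    have := (exp_eq_one_or_eq_zero_of_hasDerivAt hderiv₁ (by rw [h.periodic_fst])).resolve_left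
      (by rwa [exp_mul_two_pi_eq_one_iff])
    exact fun t ht => by exact_mod_cast this t ht
  exact fun t ht => ⟨hx₁ t ht, by rw [hx₂ t ht, hx₁ t ht, mul_zero]⟩

theorem resonance_of_not_forall_eq_zero (h : IsPeriodicSolution s lam x₁ x₂)
    (hne : ¬∀ t ∈ Icc 0 (2 * π), x₁ t = 0 ∧ x₂ t = 0) :
    s ^ 2 + lam ^ 2 = 1 ∨ (s = 0 ∧ ∃ n : ℕ, 0 < n ∧ lam ^ 2 = 1 + (n : ℝ) ^ 2) := by
  by_cases hlam : lam ^ 2 = 1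
  · by_cases hs : s = 0
    · left
      rw [hs, hlam]
      ring
    · exact absurd (h.eq_zero_of_sq_eq_one hs hlam) hne
  obtain ⟨μ, n, hμ, hn⟩ : ∃ μ : ℂ, ∃ n : ℤ, (μ - s) ^ 2 = 1 - lam ^ 2 ∧ μ = n * Complex.I := by
    by_contra! hnone
    refine hne fun t ht => ?_
    have := eq_zero_of_forall_isLeftEigenpair hlam (v₁ := x₁ t) (v₂ := x₂ t) fun a b μ hab hμ =>
      (h.exists_eq_int_mul_I_or_combo_eq_zero hab |>.resolve_left fun ⟨n, hn⟩ => hnone μ n hμ hn)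
        t ht
    exact_mod_cast this
  obtain ⟨hns, hsum⟩ := mul_eq_zero_and_sq_add_sq_eq_of_eq_int_mul_I hμ hn
  rcases eq_or_ne n 0 with rfl | hn0
  · left
    simpa using hsum
  · have hs : s = 0 := (mul_eq_zero.1 hns).resolve_left (by exact_mod_cast hn0)
    refine Or.inr ⟨hs, n.natAbs, Int.natAbs_pos.2 hn0, ?_⟩
    rw [Nat.cast_natAbs, Int.cast_abs, sq_abs]
    linear_combination hsum - s * hs

theorem apply_eq_apply_zero_of_ne_zero (h : IsPeriodicSolution s lam x₁ x₂) (hs : s ≠ 0) :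
    ∀ t ∈ Icc 0 (2 * π), x₁ t = x₁ 0 ∧ x₂ t = x₂ 0 := by
  have h₀ : (0 : ℝ) ∈ Icc 0 (2 * π) := left_mem_Icc.2 two_pi_pos.le
  by_cases hlam : lam ^ 2 = 1
  · have hz := h.eq_zero_of_sq_eq_one hs hlam
    exact fun t ht => ⟨by rw [(hz t ht).1, (hz 0 h₀).1], by rw [(hz t ht).2, (hz 0 h₀).2]⟩
  intro t ht
  have := eq_zero_of_forall_isLeftEigenpair (s := s) hlam (v₁ := x₁ t - x₁ 0) (v₂ := x₂ t - x₂ 0)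
    fun a b μ hab hμ => ?_
  · simp only [sub_eq_zero] at this
    exact_mod_cast this
  rcases h.exists_eq_int_mul_I_or_combo_eq_zero hab with ⟨n, hn⟩ | hzero
  · have hn0 : n = 0 := by
      have := (mul_eq_zero_and_sq_add_sq_eq_of_eq_int_mul_I hμ hn).1
      exact_mod_cast (mul_eq_zero.1 this).resolve_right hs
    have := eq_exp_mul_of_hasDerivAt (fun t ht => h.hasDerivAt_combo_of_isLeftEigenpair hab ht) t ht
    rw [hn, hn0] at this
    simp only [Int.cast_zero, zero_mul, Complex.exp_zero, one_mul] at this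
    linear_combination this
  · linear_combination hzero t ht - hzero 0 h₀

end IsPeriodicSolution

theorem isPeriodicSolution_const {s lam c₁ c₂ : ℝ} (h₁ : c₁ - s * c₁ = lam * c₂)
    (h₂ : -c₂ - s * c₂ = -lam * c₁) : IsPeriodicSolution s lam (fun _ => c₁) (fun _ => c₂) where
  differentiable_fst := differentiable_const c₁
  differentiable_snd := differentiable_const c₂
  deriv_fst _ _ := by rw [deriv_const, zero_add]; exact h₁
  deriv_snd _ _ := by rw [deriv_const, zero_sub]; exact h₂
  periodic_fst := rfl
  periodic_snd := rfl

theorem isPeriodicSolution_cos_sin {lam : ℝ} {n : ℕ} (hlam : lam ^ 2 = 1 + (n : ℝ) ^ 2) :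
    IsPeriodicSolution 0 lam (fun t => lam * cos (n * t))
      (fun t => cos (n * t) - n * sin (n * t)) := by
  have hcos (t : ℝ) : HasDerivAt (fun t => cos (n * t)) (-(n * sin (n * t))) t := by
    simpa [mul_comm] using ((hasDerivAt_id t).const_mul (n : ℝ)).cos
  have hsin (t : ℝ) : HasDerivAt (fun t => sin (n * t)) (n * cos (n * t)) t := by
    simpa [mul_comm] using ((hasDerivAt_id t).const_mul (n : ℝ)).sin
  have h₁ (t : ℝ) := (hcos t).const_mul lam
  have h₂ (t : ℝ) : HasDerivAt (fun t => cos (n * t) - n * sin (n * t))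
      (-(n * sin (n * t)) - n * (n * cos (n * t))) t :=
    (hcos t).sub ((hsin t).const_mul (n : ℝ))
  refine ⟨fun t => (h₁ t).differentiableAt, fun t => (h₂ t).differentiableAt, fun t _ => ?_,
    fun t _ => ?_, ?_, ?_⟩
  · rw [(h₁ t).deriv]
    ring
  · rw [(h₂ t).deriv]
    linear_combination cos (n * t) * hlam
  · simp [cos_periodic.nat_mul_eq n]
  · simp [cos_periodic.nat_mul_eq n, sin_periodic.nat_mul_eq n]

theorem exists_isPeriodicSolution_of_resonance {s lam : ℝ}
    (hres : s ^ 2 + lam ^ 2 = 1 ∨ (s = 0 ∧ ∃ n : ℕ, 0 < n ∧ lam ^ 2 = 1 + (n : ℝ) ^ 2)) :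
    ∃ x₁ x₂ : ℝ → ℝ, IsPeriodicSolution s lam x₁ x₂ ∧
      ¬∀ t ∈ Icc 0 (2 * π), x₁ t = 0 ∧ x₂ t = 0 := by
  have h₀ : (0 : ℝ) ∈ Icc 0 (2 * π) := left_mem_Icc.2 two_pi_pos.le
  rcases hres with hres | ⟨rfl, n, -, hlam⟩
  · by_cases hs : s = 1
    · have hlam : lam = 0 := by subst hs; nlinarith
      exact ⟨_, _, isPeriodicSolution_const (c₁ := 1) (c₂ := 0) (by simp [hs]) (by simp [hlam]),
        fun hz => one_ne_zero (hz 0 h₀).1⟩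
    · exact ⟨_, _, isPeriodicSolution_const (c₁ := lam) (c₂ := 1 - s) (by ring)
        (by linear_combination hres), fun hz => sub_ne_zero.2 (Ne.symm hs) (hz 0 h₀).2⟩
  · exact ⟨_, _, isPeriodicSolution_cos_sin hlam, fun hz => by simpa using (hz 0 h₀).2⟩

open Real in
/-- The periodic system `x₁' + x₁ − s x₁ = λ x₂`, `x₂' − x₂ − s x₂ = −λ x₁` on `[0, 2π]` with
`x₁(0) = x₁(2π)`, `x₂(0) = x₂(2π)`: (i) a nontrivial differentiable solution exists iff
`s² + λ² = 1`, or `s = 0` and `λ² = 1 + n²` for some positive integer `n`; (ii) if `s ≠ 0`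
every solution is constant on `[0, 2π]`. -/
theorem coupled_periodic_system_solutions (s lam : ℝ) :
    ((∃ x₁ x₂ : ℝ → ℝ, Differentiable ℝ x₁ ∧ Differentiable ℝ x₂ ∧
        (∀ t ∈ Set.Icc 0 (2 * π), deriv x₁ t + x₁ t - s * x₁ t = lam * x₂ t) ∧
        (∀ t ∈ Set.Icc 0 (2 * π), deriv x₂ t - x₂ t - s * x₂ t = -lam * x₁ t) ∧
        x₁ 0 = x₁ (2 * π) ∧ x₂ 0 = x₂ (2 * π) ∧
        ¬ (∀ t ∈ Set.Icc 0 (2 * π), x₁ t = 0 ∧ x₂ t = 0)) ↔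
      (s ^ 2 + lam ^ 2 = 1 ∨ (s = 0 ∧ ∃ n : ℕ, 0 < n ∧ lam ^ 2 = 1 + (n : ℝ) ^ 2))) ∧
    (s ≠ 0 → ∀ x₁ x₂ : ℝ → ℝ, Differentiable ℝ x₁ → Differentiable ℝ x₂ →
      (∀ t ∈ Set.Icc 0 (2 * π), deriv x₁ t + x₁ t - s * x₁ t = lam * x₂ t) →
      (∀ t ∈ Set.Icc 0 (2 * π), deriv x₂ t - x₂ t - s * x₂ t = -lam * x₁ t) →
      x₁ 0 = x₁ (2 * π) → x₂ 0 = x₂ (2 * π) →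
      ∀ t ∈ Set.Icc 0 (2 * π), x₁ t = x₁ 0 ∧ x₂ t = x₂ 0) := by
  refine ⟨⟨fun ⟨_, _, hd₁, hd₂, h₁, h₂, hp₁, hp₂, hne⟩ => ?_, fun hres => ?_⟩,
    fun hs _ _ hd₁ hd₂ h₁ h₂ hp₁ hp₂ =>
      (IsPeriodicSolution.mk hd₁ hd₂ h₁ h₂ hp₁ hp₂).apply_eq_apply_zero_of_ne_zero hs⟩
  · exact (IsPeriodicSolution.mk hd₁ hd₂ h₁ h₂ hp₁ hp₂).resonance_of_not_forall_eq_zero hne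
  · obtain ⟨x₁, x₂, h, hne⟩ := exists_isPeriodicSolution_of_resonance hres
    exact ⟨x₁, x₂, h.1, h.2, h.3, h.4, h.5, h.6, hne⟩
end
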